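/- arXiv:1511.08359 — 5 statements merged into one kernel-verified Lean document; each statement's English description precedes it below -/
import Mathlib

section
/- Let G be a locally compact Hausdorff topological group with left Haar measure μ and modular function Δ, let X be a complex Banach space, and let π : G → B(X) be a group homomorphism into the invertible bounded linear operators on X such that the map G × X → X, (g, x) ↦ π(g)x, is continuous and sup_{g ∈ G} ‖π(g)‖ < ∞. Let 𝒜 be a set of μ-integrable complex-valued functions on G such that: (a) there is a dense subset Γ ⊆ G with the property that for every g ∈ Γ and φ ∈ 𝒜 the function h ↦ Δ(g)·φ(h·g) again belongs to 𝒜; and (b) for every neighborhood V of the identity element 1 ∈ G there exists φ ∈ 𝒜 with essential support contained in V, φ ≥ 0 almost everywhere, and ∫_G φ dμ = 1. For φ ∈ L¹(G) define π(φ) ∈ B(X) by the Bochner integral π(φ)x = ∫_G φ(g)·π(g)x dμ(g). Then for every closed linear subspace Y ⊆ X one has: π(g)Y ⊆ Y for all g ∈ G if and only if π(φ)Y ⊆ Y for all φ ∈ 𝒜. -/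
open MeasureTheory ENNReal Topology
open scoped NNReal ComplexOrder

/-!
If `Y` is `π(G)`-invariant, then `π(φ)y` is a Bochner integral of `Y`-valued functions, and such
integrals stay in the closed subspace `Y`. Conversely, substituting `h ↦ hg` shows that the
translate `h ↦ Δ(g) φ(hg)` acts as `π(φ) π(g⁻¹)`, so `π(φ) π(g⁻¹) Y ⊆ Y` for `g ∈ Γ`, `φ ∈ 𝒜`.
Letting `φ` run through the nonnegative normalized functions of `𝒜` concentrated near `1`,
`π(φ)x → x` by continuity of `h ↦ π(h)x`; hence `π(g⁻¹) Y ⊆ closure Y = Y`. Finally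
`{g | π(g)y ∈ Y}` is closed and contains the dense set `Γ⁻¹`.
-/

section Integral

variable {α E : Type*} [MeasurableSpace α] {μ : Measure α} [NormedAddCommGroup E]

theorem Submodule.integral_mem [NormedSpace ℝ E] [CompleteSpace E] (Y : Submodule ℝ E)
    (hY : IsClosed (Y : Set E)) {f : α → E} (hf : ∀ᵐ a ∂μ, f a ∈ Y) : ∫ a, f a ∂μ ∈ Y := by
  by_cases hfi : Integrable f μ
  · have : IsClosed (Y : Set E) := hY
    rw [← Submodule.Quotient.mk_eq_zero, ← Submodule.mkQ_apply, ← Y.coe_mkQL,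
      ← Y.mkQL.integral_comp_comm hfi]
    exact integral_eq_zero_of_ae (hf.mono fun a ha => by simpa using ha)
  · rw [integral_undef hfi]
    exact Y.zero_mem

theorem ofReal_integral_norm_eq_integral_of_nonneg {φ : α → ℂ} (hφ : ∀ᵐ a ∂μ, 0 ≤ φ a) :
    ((∫ a, ‖φ a‖ ∂μ : ℝ) : ℂ) = ∫ a, φ a ∂μ := by
  rw [← integral_complex_ofReal]
  exact integral_congr_ae (hφ.mono fun a ha => Complex.norm_of_nonneg' ha)

theorem norm_integral_smul_sub_le [NormedSpace ℂ E] [CompleteSpace E] {φ : α → ℂ} {f : α → E}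
    {x : E} {ε : ℝ} {V : Set α} (hφ : Integrable φ μ) (hφf : Integrable (fun a => φ a • f a) μ)
    (hφV : ∀ᵐ a ∂μ, a ∉ V → φ a = 0) (hφ0 : ∀ᵐ a ∂μ, 0 ≤ φ a) (hφ1 : ∫ a, φ a ∂μ = 1)
    (hfV : ∀ a ∈ V, ‖f a - x‖ ≤ ε) : ‖∫ a, φ a • f a ∂μ - x‖ ≤ ε := by
  have hnorm : ∫ a, ‖φ a‖ ∂μ = 1 := by
    exact_mod_cast (ofReal_integral_norm_eq_integral_of_nonneg hφ0).trans hφ1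
  have hx : x = ∫ a, φ a • x ∂μ := by rw [integral_smul_const, hφ1, one_smul]
  calc ‖∫ a, φ a • f a ∂μ - x‖ = ‖∫ a, φ a • (f a - x) ∂μ‖ := by
        simp_rw [smul_sub]
        rw [integral_sub hφf (hφ.smul_const x), ← hx]
    _ ≤ ∫ a, ‖φ a‖ * ε ∂μ := by
        refine norm_integral_le_of_norm_le (hφ.norm.mul_const ε) (hφV.mono fun a ha => ?_)
        rw [norm_smul]
        by_cases haV : a ∈ V
        · exact mul_le_mul_of_nonneg_left (hfV a haV) (norm_nonneg _)
        · simp [ha haV]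
    _ = ε := by rw [integral_mul_const, hnorm, one_mul]

variable [TopologicalSpace α] [OpensMeasurableSpace α]

theorem MeasureTheory.Integrable.smul_of_continuousOn_of_ae_eq_zero_off {𝕜 : Type*}
    [NormedField 𝕜] [NormedSpace 𝕜 E] {φ : α → 𝕜} {f : α → E} {K : Set α}
    (hφ : Integrable φ μ) (hK : IsCompact K) (hKm : MeasurableSet K) (hf : ContinuousOn f K)
    (hφK : ∀ᵐ a ∂μ, a ∉ K → φ a = 0) : Integrable (fun a => φ a • f a) μ := by
  obtain ⟨C, hC⟩ := hK.exists_bound_of_continuousOn hf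
  have hon : IntegrableOn (fun a => φ a • f a) K μ :=
    hφ.integrableOn.smul_bdd C (hf.aestronglyMeasurable_of_isCompact hK hKm)
      ((ae_restrict_iff' hKm).2 (ae_of_all _ hC))
  exact hon.integrable_of_ae_notMem_eq_zero (hφK.mono fun a ha haK => by simp [ha haK])

theorem mem_closure_integral_smul_of_approx [R1Space α] [WeaklyLocallyCompactSpace α]
    [NormedSpace ℂ E] [CompleteSpace E] {𝒜 : Set (α → ℂ)} {a : α}
    (h𝒜int : ∀ φ ∈ 𝒜, Integrable φ μ)
    (h𝒜approx : ∀ V ∈ 𝓝 a, ∃ φ ∈ 𝒜,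
      (∀ᵐ b ∂μ, b ∉ V → φ b = 0) ∧ (∀ᵐ b ∂μ, 0 ≤ φ b) ∧ ∫ b, φ b ∂μ = 1)
    {f : α → E} (hf : Continuous f) : f a ∈ closure ((fun φ => ∫ b, φ b • f b ∂μ) '' 𝒜) := by
  rw [Metric.mem_closure_iff]
  intro ε hε
  obtain ⟨K, hKa, hK, hKc⟩ := exists_mem_nhds_isCompact_isClosed a
  have hV : K ∩ {b | dist (f b) (f a) < ε / 2} ∈ 𝓝 a :=
    Filter.inter_mem hKa (hf.continuousAt (Metric.ball_mem_nhds _ (half_pos hε)))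
  obtain ⟨φ, hφ𝒜, hφV, hφ0, hφ1⟩ := h𝒜approx _ hV
  have hφK : ∀ᵐ b ∂μ, b ∉ K → φ b = 0 := hφV.mono fun b hb hbK => hb fun h => hbK h.1
  have hφf := (h𝒜int φ hφ𝒜).smul_of_continuousOn_of_ae_eq_zero_off hK hKc.measurableSet
    hf.continuousOn hφK
  refine ⟨_, ⟨φ, hφ𝒜, rfl⟩, ?_⟩
  rw [dist_comm, dist_eq_norm]
  refine (norm_integral_smul_sub_le (h𝒜int φ hφ𝒜) hφf hφV hφ0 hφ1 fun b hb => ?_).trans_lt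
    (half_lt_self hε)
  rw [← dist_eq_norm]
  exact hb.2.le

end Integral

section RightTranslation

variable {G : Type*} [Group G] [MeasurableSpace G] [MeasurableMul G] {μ : Measure G} {g : G}

theorem integral_comp_mul_right_of_map_eq {E : Type*} [NormedAddCommGroup E] [NormedSpace ℝ E]
    {c : ℝ≥0} (hμ : Measure.map (fun h => h * g) μ = c • μ) (f : G → E) :
    ∫ h, f (h * g) ∂μ = c • ∫ h, f h ∂μ := by
  rw [← (measurableEmbedding_mulRight g).integral_map, hμ, integral_smul_nnreal_measure]

theorem integral_modular_smul_comp_mul_right {X : Type*} [NormedAddCommGroup X] [NormedSpace ℂ X]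
    {π : G → X →L[ℂ] X} (hπmul : ∀ g h : G, π (g * h) = (π g).comp (π h))
    {Δg : ℝ≥0} (hΔg : Δg ≠ 0) (hμ : Measure.map (fun h => h * g) μ = Δg⁻¹ • μ)
    (φ : G → ℂ) (x : X) :
    ∫ h, (((Δg : ℝ) : ℂ) * φ (h * g)) • π h x ∂μ = ∫ h, φ h • π h (π g⁻¹ x) ∂μ := by
  have hπ : ∀ h, π h x = π (h * g) (π g⁻¹ x) := fun h => by
    rw [← ContinuousLinearMap.comp_apply, ← hπmul, mul_inv_cancel_right]
  calc ∫ h, (((Δg : ℝ) : ℂ) * φ (h * g)) • π h x ∂μ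
      = ((Δg : ℝ) : ℂ) • ∫ h, φ (h * g) • π (h * g) (π g⁻¹ x) ∂μ := by
        rw [← integral_smul]
        congr 1 with h
        rw [mul_smul, hπ]
    _ = ∫ h, φ h • π h (π g⁻¹ x) ∂μ := by
        rw [integral_comp_mul_right_of_map_eq hμ fun h => φ h • π h (π g⁻¹ x), Complex.coe_smul,
          NNReal.smul_def, smul_smul, ← NNReal.coe_mul, mul_inv_cancel₀ hΔg, NNReal.coe_one,
          one_smul]

end RightTranslation

theorem statement0_general {G : Type*} [Group G] [TopologicalSpace G] [IsTopologicalGroup G]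
    [LocallyCompactSpace G] [MeasurableSpace G] [BorelSpace G]
    (μ : Measure G)
    (Δ : G → ℝ≥0) (hΔpos : ∀ g : G, 0 < Δ g)
    (hΔ : ∀ g : G, Measure.map (fun h => h * g) μ = ((Δ g)⁻¹ : ℝ≥0) • μ)
    {X : Type*} [NormedAddCommGroup X] [NormedSpace ℂ X] [CompleteSpace X]
    (π : G → X →L[ℂ] X)
    (hπ1 : π 1 = ContinuousLinearMap.id ℂ X)
    (hπmul : ∀ g h : G, π (g * h) = (π g).comp (π h))
    (hπcont : Continuous fun p : G × X => π p.1 p.2)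
    (𝒜 : Set (G → ℂ))
    (h𝒜int : ∀ φ ∈ 𝒜, Integrable φ μ)
    (Γ : Set G) (hΓ : Dense Γ)
    (h𝒜tr : ∀ g ∈ Γ, ∀ φ ∈ 𝒜, (fun h : G => ((Δ g : ℝ) : ℂ) * φ (h * g)) ∈ 𝒜)
    (h𝒜approx : ∀ V ∈ nhds (1 : G), ∃ φ ∈ 𝒜,
      (∀ᵐ h ∂μ, h ∉ V → φ h = 0) ∧ (∀ᵐ h ∂μ, 0 ≤ φ h) ∧ ∫ h, φ h ∂μ = 1)
    (Y : Submodule ℂ X) (hY : IsClosed (Y : Set X)) :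
    (∀ g : G, ∀ y ∈ Y, π g y ∈ Y) ↔
      (∀ φ ∈ 𝒜, ∀ y ∈ Y, (∫ g, φ g • π g y ∂μ) ∈ Y) := by
  have hcont (x : X) : Continuous fun g => π g x :=
    hπcont.comp (.prodMk continuous_id continuous_const)
  refine ⟨fun hinv φ _ y hy => ?_, fun H => ?_⟩
  · exact (Y.restrictScalars ℝ).integral_mem hY (ae_of_all _ fun g => Y.smul_mem _ (hinv g y hy))
  have hΓinv : ∀ g ∈ Γ, ∀ y ∈ Y, π g⁻¹ y ∈ Y := by
    intro g hg y hy
    have hmem := mem_closure_integral_smul_of_approx h𝒜int h𝒜approx (hcont (π g⁻¹ y))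
    rw [hπ1, ContinuousLinearMap.id_apply] at hmem
    refine hY.closure_subset_iff.2 ?_ hmem
    rintro _ ⟨φ, hφ, rfl⟩
    dsimp only
    rw [← integral_modular_smul_comp_mul_right hπmul (hΔpos g).ne' (hΔ g)]
    exact H _ (h𝒜tr g hg φ hφ) y hy
  intro g y hy
  have hdense : Dense ((·⁻¹) ⁻¹' Γ : Set G) := hΓ.preimage (Homeomorph.inv G).isOpenMap
  refine hY.closure_subset_iff.2 ?_ ((hcont y).range_subset_closure_image_dense hdense ⟨g, rfl⟩)
  rintro _ ⟨g', hg', rfl⟩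
  simpa using hΓinv _ hg' y hy

/-- Let `π` be a uniformly bounded continuous representation of a locally
compact group `G` on a complex Banach space `X`, let `Δ` be the modular function of the
left Haar measure `μ`, and let `𝒜` be a set of integrable functions which is invariant
under the (modular-weighted) right translations by a dense subset `Γ ⊆ G` and contains
approximate identities supported in arbitrarily small neighborhoods of `1`. Then a closed
subspace `Y ⊆ X` is invariant under all `π(g)`, `g ∈ G`, if and only if it is invariant
under all integrated operators `π(φ)`, `φ ∈ 𝒜`. -/
theorem statement0 {G : Type*} [Group G] [TopologicalSpace G] [IsTopologicalGroup G]
    [LocallyCompactSpace G] [T2Space G] [MeasurableSpace G] [BorelSpace G]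
    (μ : Measure G) [μ.IsHaarMeasure]
    (Δ : G → ℝ≥0) (hΔpos : ∀ g : G, 0 < Δ g)
    (hΔ : ∀ g : G, Measure.map (fun h => h * g) μ = ((Δ g)⁻¹ : ℝ≥0) • μ)
    {X : Type*} [NormedAddCommGroup X] [NormedSpace ℂ X] [CompleteSpace X]
    (π : G → X →L[ℂ] X)
    (hπ1 : π 1 = ContinuousLinearMap.id ℂ X)
    (hπmul : ∀ g h : G, π (g * h) = (π g).comp (π h))
    (hπcont : Continuous fun p : G × X => π p.1 p.2)
    (hπbdd : ∃ Cb : ℝ, ∀ g : G, ‖π g‖ ≤ Cb)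
    (𝒜 : Set (G → ℂ))
    (h𝒜int : ∀ φ ∈ 𝒜, Integrable φ μ)
    (Γ : Set G) (hΓ : Dense Γ)
    (h𝒜tr : ∀ g ∈ Γ, ∀ φ ∈ 𝒜, (fun h : G => ((Δ g : ℝ) : ℂ) * φ (h * g)) ∈ 𝒜)
    (h𝒜approx : ∀ V ∈ nhds (1 : G), ∃ φ ∈ 𝒜,
      (∀ᵐ h ∂μ, h ∉ V → φ h = 0) ∧ (∀ᵐ h ∂μ, 0 ≤ φ h) ∧ ∫ h, φ h ∂μ = 1)
    (Y : Submodule ℂ X) (hY : IsClosed (Y : Set X)) :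
    (∀ g : G, ∀ y ∈ Y, π g y ∈ Y) ↔
      (∀ φ ∈ 𝒜, ∀ y ∈ Y, (∫ g, φ g • π g y ∂μ) ∈ Y) :=
  statement0_general μ Δ hΔpos hΔ π hπ1 hπmul hπcont 𝒜 h𝒜int Γ hΓ h𝒜tr h𝒜approx Y hY
end

section
/- Let G be a unimodular locally compact Hausdorff topological group with Haar measure μ, and let m : G → [0,∞] be a Borel pseudo-norm on G (m(x)=0 iff x=1; m(x⁻¹)=m(x); m(xy) ≤ C_m·max(m(x),m(y)); balls B(x,r) := {y : m(xy⁻¹) < r} satisfy 0 < μ(B(1,r)) < ∞ and μ(B(1,2r)) ≤ C_d·μ(B(1,r)) for all r > 0). Let C′ > 0 and M ∈ ℕ. Then there exists a constant C″ > 0, depending only on C′ and M, for which the following holds for every continuous function γ : G × G → 𝕋 (the unit circle in ℂ): if f ∈ L¹(G), f ≥ 0 a.e. with compact essential support, α > 0, and (z_i)_{i≥1} in G and (r_i)_{i≥1} in (0,∞) are sequences satisfying (i) f ≤ α a.e. on G ∖ ⋃_i B(z_i,r_i), (ii) (1/μ(B(z_i,r_i)))·∫_{B(z_i,r_i)} f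 dμ ≤ C′α for all i, (iii) Σ_i μ(B(z_i,r_i)) ≤ (C′/α)·‖f‖_{L¹}, and (iv) every point of G lies in at most M of the balls B(z_i,r_i), then there exist functions g, b₁, b₂, … ∈ L¹(G) such that: (1) f = g + Σ_{i≥1} b_i almost everywhere on G; (2) |g| ≤ C″·α almost everywhere; (3) ‖g‖_{L¹} ≤ C″·‖f‖_{L¹}; (4) the essential support of b_i is contained in B(z_i,r_i) for every i; (5) ∫_G b_i(z)·γ(z_i, z⁻¹) dμ(z) = 0 for every i; (6) Σ_{i≥1} ‖b_i‖_{L¹} ≤ C″·‖f‖_{L¹}. -/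
/-!
Disjointify the balls `Bᵢ` into `Eᵢ ⊆ Bᵢ` and put `χᵢ(x) = γ(zᵢ, x⁻¹)`. The bad parts are
`bᵢ = 𝟙_{Eᵢ} f - cᵢ 𝟙_{Bᵢ} χ̄ᵢ` with `cᵢ = μ(Bᵢ)⁻¹ ∫_{Eᵢ} f χᵢ`; since `χ̄ᵢ χᵢ = 1`, the twisted
mean `∫ bᵢ χᵢ` vanishes. The good part `g = f - Σ bᵢ` equals `f ≤ α` off `⋃ Bᵢ` and
`Σᵢ cᵢ 𝟙_{Bᵢ} χ̄ᵢ` on it, a sum of at most `M` terms, each bounded by `|cᵢ| ≤ C' α` thanks to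
the averages of `f` over the balls. Both `L¹` bounds reduce to
`Σ |cᵢ| μ(Bᵢ) ≤ C' α Σ μ(Bᵢ) ≤ C'² ‖f‖₁`.
-/

open MeasureTheory ENNReal Topology

/-- The ball of radius `r` around `x` for the right-invariant pseudo-distance
`(x, y) ↦ m (x * y⁻¹)` associated to a pseudo-norm `m`. -/
def mball {G : Type*} [Group G] (m : G → ℝ≥0∞) (x : G) (r : ℝ≥0∞) : Set G :=
  {y : G | m (x * y⁻¹) < r}

open scoped ComplexConjugate

section Mball

variable {G : Type*} [Group G] {m : G → ℝ≥0∞}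

theorem mball_eq_preimage_mul_right (x : G) (r : ℝ≥0∞) :
    mball m x r = (· * x⁻¹) ⁻¹' mball m 1 r := by
  ext y
  simp [mball]

theorem measurableSet_mball [MeasurableSpace G] [MeasurableMul G] [MeasurableInv G]
    (hm : Measurable m) (x : G) (r : ℝ≥0∞) : MeasurableSet (mball m x r) :=
  (hm.comp (measurable_inv.const_mul x)) measurableSet_Iio

theorem measure_mball [MeasurableSpace G] [MeasurableMul G] (μ : Measure G)
    [μ.IsMulRightInvariant] (x : G) (r : ℝ≥0∞) : μ (mball m x r) = μ (mball m 1 r) := by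
  rw [mball_eq_preimage_mul_right, measure_preimage_mul_right]

end Mball

theorem norm_tsum_le_of_encard_le {ι E : Type*} [NormedAddCommGroup E] {u : ι → E} {s : Set ι}
    {M : ℕ} {D : ℝ} (hs : s.encard ≤ M) (hu : ∀ i ∉ s, u i = 0) (hD : 0 ≤ D)
    (hle : ∀ i ∈ s, ‖u i‖ ≤ D) : ‖∑' i, u i‖ ≤ M * D := by
  have hfin : s.Finite := Set.encard_ne_top_iff.1 (ne_top_of_le_ne_top (by simp) hs)
  have hcard : (hfin.toFinset.card : ℝ) ≤ M := by
    rw [hfin.encard_eq_coe_toFinset_card] at hs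
    exact_mod_cast hs
  rw [tsum_eq_sum (s := hfin.toFinset) (by simpa using hu)]
  calc ‖∑ i ∈ hfin.toFinset, u i‖ ≤ ∑ i ∈ hfin.toFinset, ‖u i‖ := norm_sum_le _ _
    _ ≤ hfin.toFinset.card • D := Finset.sum_le_card_nsmul _ _ _ (by simpa using hle)
    _ ≤ M * D := by rw [nsmul_eq_mul]; gcongr

section Series

variable {X E : Type*} [MeasurableSpace X] {μ : Measure X} [NormedAddCommGroup E]

theorem lintegral_enorm_tsum_le {f : ℕ → X → E} (hf : ∀ i, AEStronglyMeasurable (f i) μ) :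
    ∫⁻ x, ‖∑' i, f i x‖ₑ ∂μ ≤ ∑' i, ∫⁻ x, ‖f i x‖ₑ ∂μ := by
  rw [← lintegral_tsum fun i => (hf i).enorm]
  exact lintegral_mono fun x => enorm_tsum_le_tsum_enorm

theorem integrable_tsum_of_tsum_lintegral_enorm_ne_top [CompleteSpace E] {f : ℕ → X → E}
    (hf : ∀ i, AEStronglyMeasurable (f i) μ) (h : ∑' i, ∫⁻ x, ‖f i x‖ₑ ∂μ ≠ ∞) :
    Integrable (fun x => ∑' i, f i x) μ := by
  have hsum : ∀ᵐ x ∂μ, Summable fun i => ‖f i x‖ :=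
    summable_norm_of_tsum_eLpNorm_ne_top le_rfl hf (by simpa [eLpNorm_one_eq_lintegral_enorm])
  refine ⟨aestronglyMeasurable_of_tendsto_ae Filter.atTop
    (f := fun n x => ∑ i ∈ Finset.range n, f i x) (fun n => Finset.aestronglyMeasurable_fun_sum _
      fun i _ => hf i) ?_, (lintegral_enorm_tsum_le hf).trans_lt h.lt_top⟩
  filter_upwards [hsum] with x hx using hx.of_norm.hasSum.tendsto_sum_nat

end Series

namespace TwistedCZ

variable {X : Type*} [MeasurableSpace X] (μ : Measure X) (B : ℕ → Set X) (χ : ℕ → X → ℂ)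
  (f : X → ℂ)

noncomputable def coeff (i : ℕ) : ℂ :=
  (∫ x in disjointed B i, f x * χ i x ∂μ) / μ.real (B i)

noncomputable def bad (i : ℕ) : X → ℂ :=
  (disjointed B i).indicator f - (B i).indicator fun x => coeff μ B χ f i * conj (χ i x)

noncomputable def good (x : X) : ℂ :=
  f x - ∑' i, bad μ B χ f i x

variable {μ B χ f}

theorem good_add_tsum_bad (x : X) : good μ B χ f x + ∑' i, bad μ B χ f i x = f x :=
  sub_add_cancel _ _

theorem bad_eq_zero_of_notMem {i : ℕ} {x : X} (hx : x ∉ B i) : bad μ B χ f i x = 0 := by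
  have hx' : x ∉ disjointed B i := fun h => hx (disjointed_subset B i h)
  simp [bad, hx, hx']

theorem norm_coeff_mul_conj (hχ : ∀ i x, ‖χ i x‖ = 1) (i : ℕ) (x : X) :
    ‖coeff μ B χ f i * conj (χ i x)‖ = ‖coeff μ B χ f i‖ := by
  simp [hχ]

theorem norm_coeff_le (hf : Integrable f μ) (hχ : ∀ i x, ‖χ i x‖ = 1) (i : ℕ) :
    ‖coeff μ B χ f i‖ ≤ (∫ x in B i, ‖f x‖ ∂μ) / μ.real (B i) := by
  rw [coeff, norm_div, Complex.norm_real, Real.norm_of_nonneg measureReal_nonneg]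
  gcongr
  calc ‖∫ x in disjointed B i, f x * χ i x ∂μ‖ ≤ ∫ x in disjointed B i, ‖f x * χ i x‖ ∂μ :=
        norm_integral_le_integral_norm _
    _ = ∫ x in disjointed B i, ‖f x‖ ∂μ := by simp [hχ]
    _ ≤ ∫ x in B i, ‖f x‖ ∂μ := setIntegral_mono_set hf.norm.integrableOn
        (Filter.Eventually.of_forall fun _ => norm_nonneg _)
        (Filter.Eventually.of_forall (disjointed_subset B i))

theorem integrable_bad (hB : ∀ i, MeasurableSet (B i)) (hχ : ∀ i x, ‖χ i x‖ = 1)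
    (hf : Integrable f μ) (hχm : ∀ i, AEStronglyMeasurable (χ i) μ) (hμB : ∀ i, μ (B i) ≠ ∞)
    (i : ℕ) : Integrable (bad μ B χ f i) μ := by
  refine (hf.indicator (MeasurableSet.disjointed hB i)).sub ((integrable_indicator_iff (hB i)).2
    (Measure.integrableOn_of_bounded (M := ‖coeff μ B χ f i‖) (hμB i) ?_ ?_))
  · exact aestronglyMeasurable_const.mul
      (Complex.continuous_conj.comp_aestronglyMeasurable (hχm i))
  · exact Filter.Eventually.of_forall fun x => (norm_coeff_mul_conj hχ i x).le

theorem integral_bad_mul_eq_zero (hB : ∀ i, MeasurableSet (B i)) (hχ : ∀ i x, ‖χ i x‖ = 1)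
    (hf : Integrable f μ) (hχm : ∀ i, AEStronglyMeasurable (χ i) μ) {i : ℕ}
    (hμB₀ : μ (B i) ≠ 0) (hμB : μ (B i) ≠ ∞) : ∫ x, bad μ B χ f i x * χ i x ∂μ = 0 := by
  have hfχ : Integrable (fun x => f x * χ i x) μ :=
    hf.mul_bdd (hχm i) (c := 1) (Filter.Eventually.of_forall fun x => (hχ i x).le)
  have hconj : ∀ x, conj (χ i x) * χ i x = 1 := fun x => by simp [Complex.conj_mul', hχ]
  have hpt : (fun x => bad μ B χ f i x * χ i x) = fun x => (disjointed B i).indicator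
      (fun y => f y * χ i y) x - (B i).indicator (fun _ => coeff μ B χ f i) x := by
    ext x
    by_cases hxE : x ∈ disjointed B i <;> by_cases hxB : x ∈ B i <;>
      simp [bad, hxE, hxB, sub_mul, mul_assoc, hconj]
  have hμBreal : μ.real (B i) ≠ 0 := ENNReal.toReal_ne_zero.2 ⟨hμB₀, hμB⟩
  rw [hpt, integral_sub (hfχ.indicator (MeasurableSet.disjointed hB i))
    ((integrable_indicator_iff (hB i)).2 (integrableOn_const hμB)),
    integral_indicator (MeasurableSet.disjointed hB i), integral_indicator_const _ (hB i), coeff,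
    Complex.real_smul, mul_div_cancel₀ _ (by exact_mod_cast hμBreal), sub_self]

theorem lintegral_enorm_bad_le (hB : ∀ i, MeasurableSet (B i)) (hχ : ∀ i x, ‖χ i x‖ = 1)
    (hf : AEMeasurable f μ) (i : ℕ) :
    ∫⁻ x, ‖bad μ B χ f i x‖ₑ ∂μ ≤
      ∫⁻ x in disjointed B i, ‖f x‖ₑ ∂μ + ‖coeff μ B χ f i‖ₑ * μ (B i) := by
  have hpt : ∀ x, ‖bad μ B χ f i x‖ₑ ≤ (disjointed B i).indicator (fun y => ‖f y‖ₑ) x +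
      (B i).indicator (fun _ => ‖coeff μ B χ f i‖ₑ) x := by
    intro x
    refine (enorm_sub_le (E := ℂ)).trans (add_le_add ?_ ?_)
    · by_cases hx : x ∈ disjointed B i <;> simp [hx]
    · have hχe : ‖χ i x‖ₑ = 1 := by rw [← ofReal_norm, hχ, ENNReal.ofReal_one]
      by_cases hx : x ∈ B i <;> simp [hx, hχe]
  calc ∫⁻ x, ‖bad μ B χ f i x‖ₑ ∂μ
      ≤ ∫⁻ x, (disjointed B i).indicator (fun y => ‖f y‖ₑ) x +
          (B i).indicator (fun _ => ‖coeff μ B χ f i‖ₑ) x ∂μ := lintegral_mono hpt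
    _ = _ := by
      rw [lintegral_add_left' (hf.enorm.indicator (MeasurableSet.disjointed hB i)),
        lintegral_indicator (MeasurableSet.disjointed hB i), lintegral_indicator_const (hB i)]

theorem tsum_lintegral_enorm_bad_le (hB : ∀ i, MeasurableSet (B i)) (hχ : ∀ i x, ‖χ i x‖ = 1)
    (hf : AEMeasurable f μ) :
    ∑' i, ∫⁻ x, ‖bad μ B χ f i x‖ₑ ∂μ ≤
      ∫⁻ x, ‖f x‖ₑ ∂μ + ∑' i, ‖coeff μ B χ f i‖ₑ * μ (B i) := by
  calc ∑' i, ∫⁻ x, ‖bad μ B χ f i x‖ₑ ∂μ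
      ≤ ∑' i, (∫⁻ x in disjointed B i, ‖f x‖ₑ ∂μ + ‖coeff μ B χ f i‖ₑ * μ (B i)) :=
        ENNReal.tsum_le_tsum (lintegral_enorm_bad_le hB hχ hf)
    _ = ∫⁻ x in ⋃ i, disjointed B i, ‖f x‖ₑ ∂μ + ∑' i, ‖coeff μ B χ f i‖ₑ * μ (B i) := by
      rw [ENNReal.tsum_add, lintegral_iUnion (MeasurableSet.disjointed hB) (disjoint_disjointed B)]
    _ ≤ _ := add_le_add_left (setLIntegral_le_lintegral _ _) _

theorem good_eq_of_finite {x : X} (hx : {i | x ∈ B i}.Finite) :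
    good μ B χ f x = (⋃ i, B i)ᶜ.indicator f x +
      ∑' i, (B i).indicator (fun y => coeff μ B χ f i * conj (χ i y)) x := by
  have hsum : ∀ u : ℕ → ℂ, (∀ i, x ∉ B i → u i = 0) → Summable u := fun u hu =>
    summable_of_ne_finset_zero (s := hx.toFinset) fun i hi => hu i (by simpa using hi)
  have hE : Summable fun i => (disjointed B i).indicator f x := hsum _ fun i hi =>
    Set.indicator_of_notMem (fun h => hi (disjointed_subset B i h)) _
  have hK : Summable fun i => (B i).indicator (fun y => coeff μ B χ f i * conj (χ i y)) x :=
    hsum _ fun i hi => Set.indicator_of_notMem hi _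
  simp only [good, bad, Pi.sub_apply]
  rw [hE.tsum_sub hK,
    ← congrFun (indicator_iUnion_of_pairwise_disjoint _ (disjoint_disjointed B) f) x,
    iUnion_disjointed, Set.indicator_compl, Pi.sub_apply]
  ring

theorem norm_coeff_le_of_setIntegral_le (hf : Integrable f μ) (hχ : ∀ i x, ‖χ i x‖ = 1) {i : ℕ}
    {A : ℝ} (hμB : 0 < μ.real (B i)) (havg : ∫ x in B i, ‖f x‖ ∂μ ≤ A * μ.real (B i)) :
    ‖coeff μ B χ f i‖ ≤ A :=
  (norm_coeff_le hf hχ i).trans ((div_le_iff₀ hμB).2 havg)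

theorem norm_good_le (hχ : ∀ i x, ‖χ i x‖ = 1) {x : X} {M : ℕ} {D : ℝ} (hD : 0 ≤ D)
    (hc : ∀ i, ‖coeff μ B χ f i‖ ≤ D) (hx : {i | x ∈ B i}.encard ≤ M) :
    ‖good μ B χ f x‖ ≤ ‖(⋃ i, B i)ᶜ.indicator f x‖ + M * D := by
  have hfin : {i | x ∈ B i}.Finite := Set.encard_ne_top_iff.1 (ne_top_of_le_ne_top (by simp) hx)
  rw [good_eq_of_finite hfin]
  refine (norm_add_le _ _).trans ?_
  gcongr
  refine norm_tsum_le_of_encard_le hx (fun i (hi : x ∉ B i) => Set.indicator_of_notMem hi _) hD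
    fun i (hi : x ∈ B i) => ?_
  rw [Set.indicator_of_mem hi, norm_coeff_mul_conj hχ]
  exact hc i

theorem lintegral_enorm_good_le (hB : ∀ i, MeasurableSet (B i)) (hχ : ∀ i x, ‖χ i x‖ = 1)
    (hf : Integrable f μ) (hχm : ∀ i, AEStronglyMeasurable (χ i) μ) (hμB : ∀ i, μ (B i) ≠ ∞) :
    ∫⁻ x, ‖good μ B χ f x‖ₑ ∂μ ≤
      2 * ∫⁻ x, ‖f x‖ₑ ∂μ + ∑' i, ‖coeff μ B χ f i‖ₑ * μ (B i) := by
  have hbad := fun i => (integrable_bad hB hχ hf hχm hμB i).aestronglyMeasurable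
  calc ∫⁻ x, ‖good μ B χ f x‖ₑ ∂μ ≤ ∫⁻ x, ‖f x‖ₑ + ‖∑' i, bad μ B χ f i x‖ₑ ∂μ :=
        lintegral_mono fun x => enorm_sub_le
    _ ≤ ∫⁻ x, ‖f x‖ₑ ∂μ + ∑' i, ∫⁻ x, ‖bad μ B χ f i x‖ₑ ∂μ := by
        rw [lintegral_add_left' hf.aestronglyMeasurable.enorm]
        gcongr
        exact lintegral_enorm_tsum_le hbad
    _ ≤ _ := by
        grw [tsum_lintegral_enorm_bad_le hB hχ hf.aemeasurable, two_mul, add_assoc]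

theorem integrable_good (hB : ∀ i, MeasurableSet (B i)) (hχ : ∀ i x, ‖χ i x‖ = 1)
    (hf : Integrable f μ) (hχm : ∀ i, AEStronglyMeasurable (χ i) μ) (hμB : ∀ i, μ (B i) ≠ ∞)
    (hc : ∑' i, ‖coeff μ B χ f i‖ₑ * μ (B i) ≠ ∞) : Integrable (good μ B χ f) μ := by
  refine hf.sub (integrable_tsum_of_tsum_lintegral_enorm_ne_top
    (fun i => (integrable_bad hB hχ hf hχm hμB i).aestronglyMeasurable) ?_)
  exact ne_top_of_le_ne_top (add_ne_top.2 ⟨hf.2.ne, hc⟩)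
    (tsum_lintegral_enorm_bad_le hB hχ hf.aemeasurable)

theorem tsum_enorm_coeff_mul_measure_le {A V : ℝ} (hA : 0 ≤ A)
    (hc : ∀ i, ‖coeff μ B χ f i‖ ≤ A) (hvol : ∑' i, μ (B i) ≤ ENNReal.ofReal V) :
    ∑' i, ‖coeff μ B χ f i‖ₑ * μ (B i) ≤ ENNReal.ofReal (A * V) :=
  calc ∑' i, ‖coeff μ B χ f i‖ₑ * μ (B i) ≤ ∑' i, ENNReal.ofReal A * μ (B i) := by
        gcongr with i
        rw [← ofReal_norm]
        exact ENNReal.ofReal_le_ofReal (hc i)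
    _ ≤ ENNReal.ofReal (A * V) := by
        rw [ENNReal.tsum_mul_left, ENNReal.ofReal_mul hA]
        gcongr

theorem ae_norm_good_le (hχ : ∀ i x, ‖χ i x‖ = 1) {α A : ℝ} {M : ℕ} (hα : 0 ≤ α) (hA : 0 ≤ A)
    (hsmall : ∀ᵐ x ∂μ, x ∉ ⋃ i, B i → ‖f x‖ ≤ α) (hc : ∀ i, ‖coeff μ B χ f i‖ ≤ A)
    (hoverlap : ∀ x, {i | x ∈ B i}.encard ≤ M) :
    ∀ᵐ x ∂μ, ‖good μ B χ f x‖ ≤ α + M * A := by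
  filter_upwards [hsmall] with x hx
  refine (norm_good_le hχ hA hc (hoverlap x)).trans (add_le_add_left ?_ _)
  by_cases h : x ∈ ⋃ i, B i
  · rw [Set.indicator_of_notMem (Set.notMem_compl_iff.2 h), norm_zero]
    exact hα
  · rw [Set.indicator_of_mem (Set.mem_compl h)]
    exact hx h

theorem integral_norm_good_le (hB : ∀ i, MeasurableSet (B i)) (hχ : ∀ i x, ‖χ i x‖ = 1)
    (hf : Integrable f μ) (hχm : ∀ i, AEStronglyMeasurable (χ i) μ) (hμB : ∀ i, μ (B i) ≠ ∞)
    {K : ℝ} (hK : 0 ≤ K) (hc : ∑' i, ‖coeff μ B χ f i‖ₑ * μ (B i) ≤ ENNReal.ofReal K) :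
    ∫ x, ‖good μ B χ f x‖ ∂μ ≤ 2 * ∫ x, ‖f x‖ ∂μ + K := by
  have hg := integrable_good hB hχ hf hχm hμB (ne_top_of_le_ne_top ofReal_ne_top hc)
  rw [integral_norm_eq_lintegral_enorm hg.1]
  refine ENNReal.toReal_le_of_le_ofReal (by positivity) ?_
  grw [lintegral_enorm_good_le hB hχ hf hχm hμB, hc,
    ← ofReal_integral_norm_eq_lintegral_enorm hf, ENNReal.ofReal_add (by positivity) hK,
    ENNReal.ofReal_mul zero_le_two, ENNReal.ofReal_ofNat]

theorem tsum_lintegral_enorm_bad_le_ofReal (hB : ∀ i, MeasurableSet (B i))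
    (hχ : ∀ i x, ‖χ i x‖ = 1) (hf : Integrable f μ) {K : ℝ} (hK : 0 ≤ K)
    (hc : ∑' i, ‖coeff μ B χ f i‖ₑ * μ (B i) ≤ ENNReal.ofReal K) :
    ∑' i, ∫⁻ x, ‖bad μ B χ f i x‖ₑ ∂μ ≤ ENNReal.ofReal (∫ x, ‖f x‖ ∂μ + K) := by
  grw [tsum_lintegral_enorm_bad_le hB hχ hf.aemeasurable, hc,
    ← ofReal_integral_norm_eq_lintegral_enorm hf, ENNReal.ofReal_add (by positivity) hK]

end TwistedCZ

open TwistedCZ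

theorem statement2_general {G : Type*} [Group G] [TopologicalSpace G] [IsTopologicalGroup G]
    [MeasurableSpace G] [BorelSpace G]
    (μ : Measure G) [μ.IsMulRightInvariant]
    (m : G → ℝ≥0∞) (hmeas : Measurable m)
    (hfin : ∀ r : ℝ, 0 < r →
      0 < μ (mball m 1 (ENNReal.ofReal r)) ∧ μ (mball m 1 (ENNReal.ofReal r)) < ⊤)
    (C' : ℝ) (hC' : 0 < C') (M : ℕ) :
    ∃ C'' : ℝ, 0 < C'' ∧
      ∀ γ : G × G → ℂ, Continuous γ → (∀ p : G × G, ‖γ p‖ = 1) →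
      ∀ f : G → ℝ, Integrable f μ → 0 ≤ᵐ[μ] f →
        (∃ K : Set G, IsCompact K ∧ ∀ᵐ x ∂μ, x ∉ K → f x = 0) →
      ∀ α : ℝ, 0 < α →
      ∀ (z : ℕ → G) (r : ℕ → ℝ), (∀ i : ℕ, 0 < r i) →
        (∀ᵐ x ∂μ, x ∉ (⋃ i : ℕ, mball m (z i) (ENNReal.ofReal (r i))) → f x ≤ α) →
        (∀ i : ℕ, ∫ x in mball m (z i) (ENNReal.ofReal (r i)), f x ∂μ ≤
          C' * α * (μ (mball m (z i) (ENNReal.ofReal (r i)))).toReal) →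
        (∑' i : ℕ, μ (mball m (z i) (ENNReal.ofReal (r i))) ≤
          ENNReal.ofReal ((C' / α) * ∫ x, f x ∂μ)) →
        (∀ x : G, {i : ℕ | x ∈ mball m (z i) (ENNReal.ofReal (r i))}.encard ≤ (M : ℕ∞)) →
      ∃ (g : G → ℂ) (b : ℕ → G → ℂ),
        Integrable g μ ∧ (∀ i : ℕ, Integrable (b i) μ) ∧
        (∀ᵐ x ∂μ, (f x : ℂ) = g x + ∑' i : ℕ, b i x) ∧
        (∀ᵐ x ∂μ, ‖g x‖ ≤ C'' * α) ∧
        (∫ x, ‖g x‖ ∂μ ≤ C'' * ∫ x, |f x| ∂μ) ∧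
        (∀ i : ℕ, ∀ᵐ x ∂μ, x ∉ mball m (z i) (ENNReal.ofReal (r i)) → b i x = 0) ∧
        (∀ i : ℕ, ∫ x, b i x * γ (z i, x⁻¹) ∂μ = 0) ∧
        (∑' i : ℕ, ∫⁻ x, ‖b i x‖₊ ∂μ ≤ ENNReal.ofReal (C'' * ∫ x, |f x| ∂μ)) := by
  refine ⟨C' ^ 2 + M * C' + 2, by positivity, ?_⟩
  intro γ hγ hγ1 f hf hf0 _ α hα z r hr hsmall havg hvol hoverlap
  set B : ℕ → Set G := fun i => mball m (z i) (ENNReal.ofReal (r i))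
  set χ : ℕ → G → ℂ := fun i x => γ (z i, x⁻¹)
  set F : G → ℂ := fun x => f x
  have hB : ∀ i, MeasurableSet (B i) := fun i => measurableSet_mball hmeas _ _
  have hμB₀ : ∀ i, μ (B i) ≠ 0 := fun i => (measure_mball μ (z i) _ ▸ hfin _ (hr i)).1.ne'
  have hμB : ∀ i, μ (B i) ≠ ∞ := fun i => (measure_mball μ (z i) _ ▸ hfin _ (hr i)).2.ne
  have hχ : ∀ i x, ‖χ i x‖ = 1 := fun i x => hγ1 _
  have hχm : ∀ i, AEStronglyMeasurable (χ i) μ := fun i =>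
    (hγ.comp (continuous_const.prodMk continuous_inv)).aestronglyMeasurable
  have hF : Integrable F μ := hf.ofReal
  have hnormF : ∀ᵐ x ∂μ, ‖F x‖ = f x := hf0.mono fun x hx => by simp [F, abs_of_nonneg hx]
  have hnormF₁ : ∫ x, ‖F x‖ ∂μ = ∫ x, |f x| ∂μ := by simp [F]
  have hf₁ : 0 ≤ ∫ x, |f x| ∂μ := integral_nonneg fun x => abs_nonneg _
  have hsmallF : ∀ᵐ x ∂μ, x ∉ ⋃ i, B i → ‖F x‖ ≤ α := by
    filter_upwards [hsmall, hnormF] with x hx hxF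
    rwa [hxF]
  have hc : ∀ i, ‖coeff μ B χ F i‖ ≤ C' * α := fun i =>
    norm_coeff_le_of_setIntegral_le hF hχ (ENNReal.toReal_pos (hμB₀ i) (hμB i))
      ((setIntegral_congr_ae (hB i) (hnormF.mono fun x hx _ => hx)).trans_le (havg i))
  have hcsum : ∑' i, ‖coeff μ B χ F i‖ₑ * μ (B i) ≤ ENNReal.ofReal (C' ^ 2 * ∫ x, |f x| ∂μ) := by
    convert tsum_enorm_coeff_mul_measure_le (by positivity) hc hvol using 2
    rw [← integral_congr_ae (hf0.mono fun x hx => abs_of_nonneg hx)]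
    field_simp
  refine ⟨good μ B χ F, bad μ B χ F,
    integrable_good hB hχ hF hχm hμB (ne_top_of_le_ne_top ofReal_ne_top hcsum),
    integrable_bad hB hχ hF hχm hμB, ae_of_all _ fun x => (good_add_tsum_bad (f := F) x).symm,
    ?_, ?_, fun i => ae_of_all _ fun x hx => bad_eq_zero_of_notMem hx,
    fun i => integral_bad_mul_eq_zero hB hχ hF hχm (hμB₀ i) (hμB i), ?_⟩
  · filter_upwards [ae_norm_good_le hχ hα.le (by positivity) hsmallF hc hoverlap] with x hx
    nlinarith [mul_pos hC' hα]
  · grw [integral_norm_good_le hB hχ hF hχm hμB (by positivity) hcsum, hnormF₁]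
    nlinarith [mul_nonneg (Nat.cast_nonneg (α := ℝ) M) hC'.le]
  · simp only [← enorm_eq_nnnorm]
    grw [tsum_lintegral_enorm_bad_le_ofReal hB hχ hF (by positivity) hcsum, hnormF₁]
    exact ENNReal.ofReal_le_ofReal (by nlinarith [mul_nonneg (Nat.cast_nonneg (α := ℝ) M) hC'.le])

/-- Twisted Calderón–Zygmund decomposition: given the output of the
covering lemma (with constants `C'`, `M`), there is `C'' > 0` depending only on `C'` and
`M` such that for every continuous unimodular function `γ : G × G → 𝕋` and every a.e.
nonnegative integrable `f` with compact essential support one can write `f = g + Σᵢ bᵢ`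
with `|g| ≤ C''·α` a.e., `‖g‖₁ ≤ C''·‖f‖₁`, each `bᵢ` essentially supported in
`B(zᵢ, rᵢ)` with twisted mean zero `∫ bᵢ(z)·γ(zᵢ, z⁻¹) dμ(z) = 0`, and
`Σᵢ ‖bᵢ‖₁ ≤ C''·‖f‖₁`. -/
theorem statement2 {G : Type*} [Group G] [TopologicalSpace G] [IsTopologicalGroup G]
    [LocallyCompactSpace G] [T2Space G] [MeasurableSpace G] [BorelSpace G]
    (μ : Measure G) [μ.IsHaarMeasure] [μ.IsMulRightInvariant]
    (m : G → ℝ≥0∞) (hmeas : Measurable m)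
    (h0 : ∀ x : G, m x = 0 ↔ x = 1)
    (hsymm : ∀ x : G, m x⁻¹ = m x)
    (Cm : ℝ) (hCm : 1 ≤ Cm)
    (hmul : ∀ x y : G, m (x * y) ≤ ENNReal.ofReal Cm * max (m x) (m y))
    (hfin : ∀ r : ℝ, 0 < r →
      0 < μ (mball m 1 (ENNReal.ofReal r)) ∧ μ (mball m 1 (ENNReal.ofReal r)) < ⊤)
    (Cd : ℝ) (hCd : 0 < Cd)
    (hdouble : ∀ r : ℝ, 0 < r →
      μ (mball m 1 (ENNReal.ofReal (2 * r))) ≤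
        ENNReal.ofReal Cd * μ (mball m 1 (ENNReal.ofReal r)))
    (C' : ℝ) (hC' : 0 < C') (M : ℕ) :
    ∃ C'' : ℝ, 0 < C'' ∧
      ∀ γ : G × G → ℂ, Continuous γ → (∀ p : G × G, ‖γ p‖ = 1) →
      ∀ f : G → ℝ, Integrable f μ → 0 ≤ᵐ[μ] f →
        (∃ K : Set G, IsCompact K ∧ ∀ᵐ x ∂μ, x ∉ K → f x = 0) →
      ∀ α : ℝ, 0 < α →
      ∀ (z : ℕ → G) (r : ℕ → ℝ), (∀ i : ℕ, 0 < r i) →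
        (∀ᵐ x ∂μ, x ∉ (⋃ i : ℕ, mball m (z i) (ENNReal.ofReal (r i))) → f x ≤ α) →
        (∀ i : ℕ, ∫ x in mball m (z i) (ENNReal.ofReal (r i)), f x ∂μ ≤
          C' * α * (μ (mball m (z i) (ENNReal.ofReal (r i)))).toReal) →
        (∑' i : ℕ, μ (mball m (z i) (ENNReal.ofReal (r i))) ≤
          ENNReal.ofReal ((C' / α) * ∫ x, f x ∂μ)) →
        (∀ x : G, {i : ℕ | x ∈ mball m (z i) (ENNReal.ofReal (r i))}.encard ≤ (M : ℕ∞)) →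
      ∃ (g : G → ℂ) (b : ℕ → G → ℂ),
        Integrable g μ ∧ (∀ i : ℕ, Integrable (b i) μ) ∧
        (∀ᵐ x ∂μ, (f x : ℂ) = g x + ∑' i : ℕ, b i x) ∧
        (∀ᵐ x ∂μ, ‖g x‖ ≤ C'' * α) ∧
        (∫ x, ‖g x‖ ∂μ ≤ C'' * ∫ x, |f x| ∂μ) ∧
        (∀ i : ℕ, ∀ᵐ x ∂μ, x ∉ mball m (z i) (ENNReal.ofReal (r i)) → b i x = 0) ∧
        (∀ i : ℕ, ∫ x, b i x * γ (z i, x⁻¹) ∂μ = 0) ∧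
        (∑' i : ℕ, ∫⁻ x, ‖b i x‖₊ ∂μ ≤ ENNReal.ofReal (C'' * ∫ x, |f x| ∂μ)) :=
  statement2_general μ m hmeas hfin C' hC' M
end

section
/- Let G be a second-countable unimodular locally compact Hausdorff topological group with Haar measure μ, and let γ : G × G → 𝕋 be a continuous normalized 2-cocycle, i.e. γ(x,y)·γ(xy,z) = γ(x,yz)·γ(y,z) for all x,y,z ∈ G and γ(x,1) = γ(1,x) = 1 for all x ∈ G. Define the γ-twisted convolution (φ ∗_γ ψ)(x) := ∫_G γ(x, y⁻¹)·φ(x·y⁻¹)·ψ(y) dμ(y), and for v ∈ G and 1 ≤ r < ∞ let ρ_r(v) : L^r(G) → L^r(G) be the surjective linear isometry (ρ_r(v)φ)(x) := γ(x, v⁻¹)·φ(x·v⁻¹). Let 1 ≤ p ≤ q < ∞ and let C : L^p(G) → L^q(G) be a bounded linear operator. Then the following are equivalent: (i) C(φ ∗_γ ψ) = (Cφ) ∗_γ ψ for all φ, ψ ∈ L¹(G) ∩ L^p(G); (ii) ρ_q(v) ∘ C = C ∘ ρ_p(v) for every v ∈ G. -/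
/-!
The twisted right translations `ρ(v)` are linear isometries of `L^r` that depend continuously on
`v` when `r < ∞`, and for `ψ ∈ L¹` the twisted convolution `φ ∗_γ ψ` is the `L^r`-valued Bochner
integral `∫ ψ(y) • ρ(y)φ dμ(y)` (compare set integrals over sets of finite measure and use
Fubini). Hence an operator commuting with every `ρ(v)` commutes with these integrals, i.e. with
convolutions. Conversely, if `C` commutes with convolutions and `φ ∈ L¹ ∩ L^p`, the continuous
`L^q`-valued function `u(v) = C(ρ(v)φ) - ρ(v)(Cφ)` satisfies `∫ ψ • u = 0` for all
`ψ ∈ L¹ ∩ L^p`; testing against indicators of compact sets shows `u = 0`, and `L¹ ∩ L^p` is dense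
in `L^p`.
-/

open MeasureTheory ENNReal Topology Filter

/-- The `γ`-twisted convolution `(k ∗_γ f)(x) = ∫ γ(x,y⁻¹)·k(xy⁻¹)·f(y) dμ(y)`. -/
noncomputable def tconv {G : Type*} [Group G] [MeasurableSpace G] (μ : Measure G)
    (γ : G × G → ℂ) (k f : G → ℂ) : G → ℂ :=
  fun x => ∫ y, γ (x, y⁻¹) * k (x * y⁻¹) * f y ∂μ

namespace MeasureTheory

section FiniteMeasure

variable {X E : Type*} [MeasurableSpace X] [NormedAddCommGroup E] {ν : Measure X}
  [IsFiniteMeasure ν] {r : ℝ≥0∞}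

theorem integral_norm_le_of_memLp (hr : 1 ≤ r) {f : X → E} (hf : MemLp f r ν) :
    ∫ x, ‖f x‖ ∂ν ≤ (ν Set.univ ^ (1 - 1 / r.toReal)).toReal * (eLpNorm f r ν).toReal := by
  have hHolder : eLpNorm f 1 ν ≤ eLpNorm f r ν * ν Set.univ ^ (1 - 1 / r.toReal) := by
    simpa using eLpNorm_le_eLpNorm_mul_rpow_measure_univ hr hf.1
  have hexp : 0 ≤ 1 - 1 / r.toReal := by
    rcases eq_or_ne r ∞ with rfl | hrt
    · simp
    · have : 1 ≤ r.toReal := by simpa using ENNReal.toReal_mono hrt hr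
      linarith [div_le_one_of_le₀ this ENNReal.toReal_nonneg]
  rw [integral_norm_eq_lintegral_enorm hf.1, ← eLpNorm_one_eq_lintegral_enorm, mul_comm,
    ← ENNReal.toReal_mul]
  exact ENNReal.toReal_mono (ENNReal.mul_ne_top hf.2.ne
    (ENNReal.rpow_ne_top_of_nonneg hexp (measure_ne_top ν _))) hHolder

variable (ν r) [NormedSpace ℝ E] [Fact (1 ≤ r)]

noncomputable def Lp.integralCLM : Lp E r ν →L[ℝ] E :=
  LinearMap.mkContinuous
    { toFun := fun f => ∫ x, f x ∂ν
      map_add' := fun f g => by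
        rw [← integral_add ((Lp.memLp f).integrable Fact.out) ((Lp.memLp g).integrable Fact.out)]
        exact integral_congr_ae (Lp.coeFn_add f g)
      map_smul' := fun c f => by
        rw [RingHom.id_apply, ← integral_smul]
        exact integral_congr_ae (Lp.coeFn_smul c f) }
    (ν Set.univ ^ (1 - 1 / r.toReal)).toReal fun f =>
      (norm_integral_le_integral_norm _).trans <|
        (integral_norm_le_of_memLp Fact.out (Lp.memLp f)).trans_eq <| by rw [Lp.norm_def]

end FiniteMeasure

variable {X Y E : Type*} [MeasurableSpace X] [MeasurableSpace Y] [NormedAddCommGroup E]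
  {μ : Measure X} {ν : Measure Y} {r : ℝ≥0∞}

theorem MemLp.integrableOn_of_measure_ne_top [Fact (1 ≤ r)] {f : X → E} (hf : MemLp f r μ)
    {s : Set X} (hs : μ s ≠ ∞) : IntegrableOn f s μ := by
  have : IsFiniteMeasure (μ.restrict s) := isFiniteMeasure_restrict.2 hs
  exact (hf.restrict s).integrable Fact.out

theorem Lp.dense_setOf_integrable [Fact (1 ≤ r)] (hr : r ≠ ∞) :
    Dense {f : Lp E r μ | Integrable f μ} := by
  refine (Lp.simpleFunc.dense hr).mono fun f hf => ?_
  lift f to Lp.simpleFunc E r μ using hf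
  have hr0 : r ≠ 0 := (one_pos.trans_le Fact.out).ne'
  exact ((SimpleFunc.memLp_iff_integrable hr0 hr).1 (Lp.simpleFunc.memLp f)).congr
    (Lp.simpleFunc.toSimpleFunc_eq_toFun f)

theorem tendsto_eLpNorm_smul_of_tendsto_zero {𝕜 ι : Type*} [NormedField 𝕜] [NormedSpace 𝕜 E]
    {l : Filter ι} [l.IsCountablyGenerated] {c : ι → X → 𝕜}
    (hc : ∀ i, AEStronglyMeasurable (c i) μ) {M : ℝ} (hcM : ∀ i x, ‖c i x‖ ≤ M)
    (hlim : ∀ᵐ x ∂μ, Tendsto (fun i => c i x) l (𝓝 0)) {g : X → E} (hg : MemLp g r μ)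
    (hr : r ≠ ∞) :
    Tendsto (fun i => eLpNorm (fun x => c i x • g x) r μ) l (𝓝 0) := by
  rcases eq_or_ne r 0 with rfl | hr0
  · simp [tendsto_const_nhds]
  have hr_pos : 0 < r.toReal := ENNReal.toReal_pos hr0 hr
  have hdom : ∀ i x, ‖c i x • g x‖ₑ ^ r.toReal ≤ (ENNReal.ofReal M * ‖g x‖ₑ) ^ r.toReal :=
    fun i x => by
      rw [enorm_smul, ← ofReal_norm (c i x)]
      gcongr
      exact hcM i x
  have hbound : ∫⁻ x, (ENNReal.ofReal M * ‖g x‖ₑ) ^ r.toReal ∂μ ≠ ∞ := by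
    simp_rw [ENNReal.mul_rpow_of_nonneg _ _ hr_pos.le]
    rw [lintegral_const_mul' _ _ (ENNReal.rpow_ne_top_of_nonneg hr_pos.le ofReal_ne_top)]
    exact ENNReal.mul_ne_top (ENNReal.rpow_ne_top_of_nonneg hr_pos.le ofReal_ne_top)
      (lintegral_rpow_enorm_lt_top_of_eLpNorm_lt_top hr0 hr hg.2).ne
  have hpointwise : ∀ᵐ x ∂μ, Tendsto (fun i => ‖c i x • g x‖ₑ ^ r.toReal) l (𝓝 0) := by
    filter_upwards [hlim] with x hx
    simpa [ENNReal.zero_rpow_of_pos hr_pos] using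
      ((hx.smul_const (g x)).enorm).ennrpow_const r.toReal
  have hlint := tendsto_lintegral_filter_of_dominated_convergence' _
    (Eventually.of_forall fun i => ((hc i).smul hg.1).enorm.pow_const _)
    (Eventually.of_forall fun i => Eventually.of_forall (hdom i)) hbound hpointwise
  simp only [eLpNorm_eq_lintegral_rpow_enorm_toReal hr0 hr]
  simpa [ENNReal.zero_rpow_of_pos (inv_pos.2 hr_pos)] using hlint.ennrpow_const (1 / r.toReal)

theorem Lp.integrable_restrict_prod_of_integrable [Fact (1 ≤ r)] [SFinite μ] [SFinite ν]
    {T : Y → Lp E r μ} (hT : Integrable T ν) {K : X × Y → E}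
    (hK : AEStronglyMeasurable K (μ.prod ν)) (hTK : ∀ᵐ y ∂ν, T y =ᵐ[μ] fun x => K (x, y))
    {s : Set X} (hs : μ s ≠ ∞) :
    Integrable K ((μ.restrict s).prod ν) := by
  have : IsFiniteMeasure (μ.restrict s) := isFiniteMeasure_restrict.2 hs
  have hKs : AEStronglyMeasurable K ((μ.restrict s).prod ν) := by
    rw [← Measure.restrict_univ (μ := ν), Measure.prod_restrict]
    exact hK.restrict
  refine (integrable_prod_iff' hKs).2 ⟨?_, ?_⟩
  · filter_upwards [hTK] with y hy
    exact ((Lp.memLp (T y)).integrableOn_of_measure_ne_top hs).congr (ae_restrict_of_ae hy)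
  · refine Integrable.mono' (hT.norm.const_mul (μ s ^ (1 - 1 / r.toReal)).toReal)
      hKs.norm.prod_swap.integral_prod_right' ?_
    filter_upwards [hTK] with y hy
    have hnorm : ∫ x in s, ‖K (x, y)‖ ∂μ = ∫ x in s, ‖T y x‖ ∂μ :=
      integral_congr_ae (ae_restrict_of_ae (hy.fun_comp norm).symm)
    rw [Real.norm_of_nonneg (integral_nonneg fun _ => norm_nonneg _), hnorm, Lp.norm_def,
      ← Measure.restrict_apply_univ]
    exact (integral_norm_le_of_memLp Fact.out ((Lp.memLp (T y)).restrict s)).trans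
      (mul_le_mul_of_nonneg_left (ENNReal.toReal_mono (Lp.eLpNorm_ne_top _)
        (eLpNorm_mono_measure _ Measure.restrict_le_self)) ENNReal.toReal_nonneg)

section Bochner

variable [NormedSpace ℝ E] [CompleteSpace E] [Fact (1 ≤ r)]

theorem Lp.setIntegral_coeFn_integral {T : Y → Lp E r μ} (hT : Integrable T ν) {s : Set X}
    (hs : μ s ≠ ∞) :
    ∫ x in s, (∫ y, T y ∂ν) x ∂μ = ∫ y, ∫ x in s, T y x ∂μ ∂ν := by
  have : IsFiniteMeasure (μ.restrict s) := isFiniteMeasure_restrict.2 hs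
  let L := (Lp.integralCLM (μ.restrict s) r).comp (LpToLpRestrictCLM X E ℝ μ r s)
  have hL : ∀ f : Lp E r μ, L f = ∫ x in s, f x ∂μ := fun f =>
    integral_congr_ae (LpToLpRestrictCLM_coeFn ℝ s f)
  simp only [← hL]
  exact (L.integral_comp_comm hT).symm

theorem Lp.coeFn_integral_ae_eq [SigmaFinite μ] [SFinite ν] {T : Y → Lp E r μ}
    (hT : Integrable T ν) {K : X × Y → E} (hK : AEStronglyMeasurable K (μ.prod ν))
    (hTK : ∀ᵐ y ∂ν, T y =ᵐ[μ] fun x => K (x, y)) :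
    ⇑(∫ y, T y ∂ν) =ᵐ[μ] fun x => ∫ y, K (x, y) ∂ν := by
  have hKs := fun s (hs : μ s < ∞) =>
    Lp.integrable_restrict_prod_of_integrable hT hK hTK hs.ne
  refine ae_eq_of_forall_setIntegral_eq_of_sigmaFinite
    (fun s _ hs => (Lp.memLp _).integrableOn_of_measure_ne_top hs.ne)
    (fun s _ hs => (hKs s hs).integral_prod_left) fun s _ hs => ?_
  rw [Lp.setIntegral_coeFn_integral hT hs.ne,
    integral_integral_swap (f := fun x y => K (x, y)) (hKs s hs)]
  refine integral_congr_ae ?_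
  filter_upwards [hTK] with y hy
  exact integral_congr_ae (ae_restrict_of_ae hy)

end Bochner

end MeasureTheory

theorem Continuous.eq_zero_of_forall_integral_smul_eq_zero {X 𝕜 E : Type*}
    [TopologicalSpace X] [T2Space X] [SecondCountableTopology X] [SigmaCompactSpace X]
    [MeasurableSpace X] [BorelSpace X] [NormedField 𝕜] [NormedAddCommGroup E] [NormedSpace 𝕜 E]
    [NormedSpace ℝ E] [CompleteSpace E] {μ : Measure X} [IsLocallyFiniteMeasure μ]
    [μ.IsOpenPosMeasure] {r : ℝ≥0∞} {u : X → E} (hu : Continuous u)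
    (h : ∀ ψ : X → 𝕜, Integrable ψ μ → MemLp ψ r μ → ∫ x, ψ x • u x ∂μ = 0) : u = 0 := by
  have hK : ∀ K : Set X, IsCompact K → ∫ x in K, u x ∂μ = 0 := fun K hK => by
    have hint : Integrable (K.indicator fun _ => (1 : 𝕜)) μ :=
      (integrable_indicator_iff hK.measurableSet).2 (integrableOn_const hK.measure_ne_top)
    have hmem : MemLp (K.indicator fun _ => (1 : 𝕜)) r μ :=
      memLp_indicator_const r hK.measurableSet 1 (Or.inr hK.measure_ne_top)
    have hind : (fun x => K.indicator (fun _ => (1 : 𝕜)) x • u x) = K.indicator u := by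
      ext x
      by_cases hx : x ∈ K <;> simp [hx]
    rw [← integral_indicator hK.measurableSet, ← hind]
    exact h _ hint hmem
  exact (Continuous.ae_eq_iff_eq μ hu continuous_const).1
    (ae_eq_zero_of_forall_setIntegral_isCompact_eq_zero' hu.locallyIntegrable hK)

/-- The twisted right translation `ρ(v)φ = γ(·, v⁻¹) φ(· v⁻¹)` of the paper. -/
def twistedTranslate {G : Type*} [Group G] (γ : G × G → ℂ) (v : G) (φ : G → ℂ) : G → ℂ :=
  fun x => γ (x, v⁻¹) * φ (x * v⁻¹)

section TwistedTranslate

variable {G : Type*} [Group G] [TopologicalSpace G] [IsTopologicalGroup G] [MeasurableSpace G]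
  [BorelSpace G] {μ : Measure G} [μ.IsMulRightInvariant] {γ : G × G → ℂ} {r : ℝ≥0∞}

theorem twistedTranslate_congr_ae {φ ψ : G → ℂ} (h : φ =ᵐ[μ] ψ) (v : G) :
    twistedTranslate γ v φ =ᵐ[μ] twistedTranslate γ v ψ := by
  filter_upwards [(measurePreserving_mul_right μ v⁻¹).quasiMeasurePreserving.ae_eq_comp h]
    with x hx
  simp only [twistedTranslate, Function.comp_apply] at hx ⊢
  rw [hx]

theorem eLpNorm_twistedTranslate (hγ1 : ∀ p, ‖γ p‖ = 1) (v : G) {φ : G → ℂ}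
    (hφ : AEStronglyMeasurable φ μ) :
    eLpNorm (twistedTranslate γ v φ) r μ = eLpNorm φ r μ := by
  rw [← eLpNorm_comp_measurePreserving hφ (measurePreserving_mul_right μ v⁻¹)]
  exact eLpNorm_congr_norm_ae (Eventually.of_forall fun x => by simp [twistedTranslate, hγ1])

theorem memLp_twistedTranslate (hγ : Continuous γ) (hγ1 : ∀ p, ‖γ p‖ = 1) (v : G) {φ : G → ℂ}
    (hφ : MemLp φ r μ) : MemLp (twistedTranslate γ v φ) r μ :=
  ⟨(hγ.comp (continuous_id.prodMk continuous_const)).aestronglyMeasurable.mul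
      (hφ.comp_measurePreserving (measurePreserving_mul_right μ v⁻¹)).1,
    (eLpNorm_twistedTranslate hγ1 v hφ.1).trans_lt hφ.2⟩

variable (μ) in
noncomputable def twistedTranslateLp (hγ : Continuous γ) (hγ1 : ∀ p, ‖γ p‖ = 1) (r : ℝ≥0∞)
    [Fact (1 ≤ r)] (v : G) : Lp ℂ r μ →ₗᵢ[ℂ] Lp ℂ r μ where
  toFun F := (memLp_twistedTranslate hγ hγ1 v (Lp.memLp F)).toLp _
  map_add' F F' := by
    rw [← MemLp.toLp_add]
    refine MemLp.toLp_congr _ _ ((twistedTranslate_congr_ae (Lp.coeFn_add F F') v).trans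
      (Eventually.of_forall fun x => ?_))
    simp [twistedTranslate, mul_add]
  map_smul' c F := by
    rw [RingHom.id_apply, ← MemLp.toLp_const_smul]
    refine MemLp.toLp_congr _ _ ((twistedTranslate_congr_ae (Lp.coeFn_smul c F) v).trans
      (Eventually.of_forall fun x => ?_))
    simp [twistedTranslate, mul_left_comm]
  norm_map' F := by
    simp only [LinearMap.coe_mk, AddHom.coe_mk]
    rw [Lp.norm_toLp, eLpNorm_twistedTranslate hγ1 v (Lp.aestronglyMeasurable F), Lp.norm_def]

variable (hγ : Continuous γ) (hγ1 : ∀ p, ‖γ p‖ = 1) [Fact (1 ≤ r)]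

theorem coeFn_twistedTranslateLp (v : G) (F : Lp ℂ r μ) :
    twistedTranslateLp μ hγ hγ1 r v F =ᵐ[μ] twistedTranslate γ v F :=
  MemLp.coeFn_toLp (memLp_twistedTranslate hγ hγ1 v (Lp.memLp F))

theorem toLp_twistedTranslate (v : G) {φ : G → ℂ} (hφ : MemLp φ r μ)
    (hρ : MemLp (twistedTranslate γ v φ) r μ) :
    hρ.toLp _ = twistedTranslateLp μ hγ hγ1 r v (hφ.toLp φ) :=
  MemLp.toLp_congr hρ (memLp_twistedTranslate hγ hγ1 v (Lp.memLp _))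
    (twistedTranslate_congr_ae hφ.coeFn_toLp.symm v)

variable (μ) in
noncomputable def twistedConvLp (r : ℝ≥0∞) [Fact (1 ≤ r)] (Φ : Lp ℂ r μ) (ψ : G → ℂ) :
    Lp ℂ r μ :=
  ∫ y, ψ y • twistedTranslateLp μ hγ hγ1 r y Φ ∂μ

theorem tendsto_eLpNorm_comp_mul_right_sub {E : Type*} [NormedAddCommGroup E]
    [μ.InnerRegularCompactLTTop] [IsLocallyFiniteMeasure μ] (hr : r ≠ ∞)
    {f : G → E} (hf : MemLp f r μ) (v₀ : G) :
    Tendsto (fun v => eLpNorm (fun x => f (x * v) - f (x * v₀)) r μ) (𝓝 v₀) (𝓝 0) := by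
  let R : G → C(G, G) := fun v => ⟨(· * v), continuous_mul_const v⟩
  have hR : ∀ v, MeasurePreserving (R v) μ μ := fun v => measurePreserving_mul_right μ v
  have hRcont : Continuous R :=
    ContinuousMap.continuous_of_continuous_uncurry _ (continuous_snd.mul continuous_fst)
  have hcomp : ∀ v, ⇑(Lp.compMeasurePreserving (R v) (hR v) (hf.toLp f)) =ᵐ[μ] f ∘ R v :=
    fun v => (Lp.coeFn_compMeasurePreserving _ (hR v)).trans
      ((hR v).quasiMeasurePreserving.ae_eq_comp hf.coeFn_toLp)
  have hLp := (Lp.tendsto_Lp_iff_tendsto_eLpNorm' _ _).1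
    (((continuous_const (y := hf.toLp f)).compMeasurePreservingLp hRcont hR hr).tendsto v₀)
  exact hLp.congr fun v => eLpNorm_congr_ae ((hcomp v).sub (hcomp v₀))

theorem continuous_twistedTranslateLp_apply [FirstCountableTopology G]
    [μ.InnerRegularCompactLTTop] [IsLocallyFiniteMeasure μ] (hr : r ≠ ∞) (F : Lp ℂ r μ) :
    Continuous fun v => twistedTranslateLp μ hγ hγ1 r v F := by
  refine continuous_iff_continuousAt.2 fun v₀ => ?_
  have hF := Lp.memLp F
  have hF₀ : MemLp (fun x => F (x * v₀⁻¹)) r μ :=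
    hF.comp_measurePreserving (measurePreserving_mul_right μ v₀⁻¹)
  have hγv : ∀ v, Continuous fun x => γ (x, v⁻¹) := fun v => by fun_prop
  have htrans := (tendsto_eLpNorm_comp_mul_right_sub hr hF v₀⁻¹).comp
    (continuous_inv.tendsto v₀)
  have hmult : Tendsto
      (fun v => eLpNorm (fun x => (γ (x, v⁻¹) - γ (x, v₀⁻¹)) • F (x * v₀⁻¹)) r μ) (𝓝 v₀) (𝓝 0) :=
    tendsto_eLpNorm_smul_of_tendsto_zero (M := 2)
      (fun v => ((hγv v).sub (hγv v₀)).aestronglyMeasurable)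
      (fun v x => (norm_sub_le _ _).trans (by rw [hγ1, hγ1]; norm_num))
      (Eventually.of_forall fun x => by
        have : Continuous fun v : G => γ (x, v⁻¹) - γ (x, v₀⁻¹) := by fun_prop
        simpa using this.tendsto v₀)
      hF₀ hr
  refine (Lp.tendsto_Lp_iff_tendsto_eLpNorm'' _ (fun v => memLp_twistedTranslate hγ hγ1 v hF) _
    (memLp_twistedTranslate hγ hγ1 v₀ hF)).2 ?_
  refine tendsto_of_tendsto_of_tendsto_of_le_of_le tendsto_const_nhds
    (by simpa using htrans.add hmult) (fun v => zero_le) fun v => ?_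
  have hsplit : twistedTranslate γ v F - twistedTranslate γ v₀ F =
      (fun x => γ (x, v⁻¹) • (F (x * v⁻¹) - F (x * v₀⁻¹))) +
        fun x => (γ (x, v⁻¹) - γ (x, v₀⁻¹)) • F (x * v₀⁻¹) := by
    ext x
    simp only [twistedTranslate, Pi.sub_apply, Pi.add_apply, smul_eq_mul]
    ring
  rw [hsplit]
  refine (eLpNorm_add_le ?_ ?_ Fact.out).trans (add_le_add (le_of_eq ?_) le_rfl)
  · exact (hγv v).aestronglyMeasurable.smul
      ((hF.comp_measurePreserving (measurePreserving_mul_right μ v⁻¹)).1.sub hF₀.1)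
  · exact ((hγv v).sub (hγv v₀)).aestronglyMeasurable.smul hF₀.1
  · exact eLpNorm_congr_norm_ae (Eventually.of_forall fun x => by simp [hγ1])

theorem quasiMeasurePreserving_mul_inv [SecondCountableTopology G] {ν : Measure G} [SFinite μ]
    [SFinite ν] :
    Measure.QuasiMeasurePreserving (fun z : G × G => z.1 * z.2⁻¹) (μ.prod ν) μ := by
  simpa [Function.comp_def, div_eq_mul_inv] using
    Measure.quasiMeasurePreserving_fst.comp (measurePreserving_div_prod μ ν).quasiMeasurePreserving

theorem tconv_congr_ae_left [SecondCountableTopology G] [SFinite μ] {φ₁ φ₂ : G → ℂ}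
    (h : φ₁ =ᵐ[μ] φ₂) (ψ : G → ℂ) : tconv μ γ φ₁ ψ =ᵐ[μ] tconv μ γ φ₂ ψ := by
  filter_upwards [Measure.ae_ae_of_ae_prod ((quasiMeasurePreserving_mul_inv (ν := μ)).ae_eq_comp h)]
    with x hx
  refine integral_congr_ae ?_
  filter_upwards [hx] with y hy
  simp only [Function.comp_apply] at hy
  rw [hy]

end TwistedTranslate

section TwistedConvolution

variable {G : Type*} [Group G] [TopologicalSpace G] [IsTopologicalGroup G]
  [LocallyCompactSpace G] [T2Space G] [SecondCountableTopology G] [MeasurableSpace G]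
  [BorelSpace G] {μ : Measure G} [μ.IsHaarMeasure] [μ.IsMulRightInvariant]
  {γ : G × G → ℂ} (hγ : Continuous γ) (hγ1 : ∀ p, ‖γ p‖ = 1) {r : ℝ≥0∞} [Fact (1 ≤ r)]

theorem integrable_smul_twistedTranslateLp (hr : r ≠ ∞) (Φ : Lp ℂ r μ) {ψ : G → ℂ}
    (hψ : Integrable ψ μ) :
    Integrable (fun y => ψ y • twistedTranslateLp μ hγ hγ1 r y Φ) μ :=
  Integrable.mono' (hψ.norm.mul_const ‖Φ‖)
    (hψ.1.smul (continuous_twistedTranslateLp_apply hγ hγ1 hr Φ).aestronglyMeasurable)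
    (Eventually.of_forall fun y => by rw [norm_smul, LinearIsometry.norm_map])

theorem coeFn_twistedConvLp (hr : r ≠ ∞) (Φ : Lp ℂ r μ) {ψ : G → ℂ} (hψ : Integrable ψ μ) :
    twistedConvLp μ hγ hγ1 r Φ ψ =ᵐ[μ] tconv μ γ Φ ψ := by
  refine Lp.coeFn_integral_ae_eq (integrable_smul_twistedTranslateLp hγ hγ1 hr Φ hψ)
    (K := fun z => γ (z.1, z.2⁻¹) * Φ (z.1 * z.2⁻¹) * ψ z.2) ?_ ?_
  · have hγinv : Continuous fun z : G × G => γ (z.1, z.2⁻¹) := by fun_prop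
    exact (hγinv.aestronglyMeasurable.mul
      ((Lp.aestronglyMeasurable Φ).comp_quasiMeasurePreserving quasiMeasurePreserving_mul_inv)).mul
      (hψ.1.comp_quasiMeasurePreserving Measure.quasiMeasurePreserving_snd)
  · refine Eventually.of_forall fun y => ?_
    filter_upwards [Lp.coeFn_smul (ψ y) (twistedTranslateLp μ hγ hγ1 r y Φ),
      coeFn_twistedTranslateLp hγ hγ1 y Φ] with x hsmul htrans
    rw [hsmul, Pi.smul_apply, htrans, twistedTranslate, smul_eq_mul]
    ring

theorem toLp_tconv (hr : r ≠ ∞) (Φ : Lp ℂ r μ) {ψ : G → ℂ} (hψ : Integrable ψ μ)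
    (hc : MemLp (tconv μ γ Φ ψ) r μ) : hc.toLp _ = twistedConvLp μ hγ hγ1 r Φ ψ :=
  (MemLp.toLp_congr hc (Lp.memLp _) (coeFn_twistedConvLp hγ hγ1 hr Φ hψ).symm).trans
    (Lp.toLp_coeFn _ _)

variable {p q : ℝ≥0∞} [Fact (1 ≤ p)] [Fact (1 ≤ q)] (C : Lp ℂ p μ →L[ℂ] Lp ℂ q μ)

theorem map_twistedConvLp_of_commute (hp : p ≠ ∞)
    (hC : ∀ v Φ, C (twistedTranslateLp μ hγ hγ1 p v Φ) = twistedTranslateLp μ hγ hγ1 q v (C Φ))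
    (Φ : Lp ℂ p μ) {ψ : G → ℂ} (hψ : Integrable ψ μ) :
    C (twistedConvLp μ hγ hγ1 p Φ ψ) = twistedConvLp μ hγ hγ1 q (C Φ) ψ := by
  rw [twistedConvLp, ← C.integral_comp_comm (integrable_smul_twistedTranslateLp hγ hγ1 hp Φ hψ)]
  simp_rw [C.map_smul, hC]
  rfl

theorem commute_of_map_twistedConvLp (hp : p ≠ ∞) (hq : q ≠ ∞)
    (H : ∀ Φ : Lp ℂ p μ, Integrable Φ μ → ∀ ψ : G → ℂ, Integrable ψ μ → MemLp ψ p μ →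
      C (twistedConvLp μ hγ hγ1 p Φ ψ) = twistedConvLp μ hγ hγ1 q (C Φ) ψ)
    (v : G) (Φ : Lp ℂ p μ) :
    C (twistedTranslateLp μ hγ hγ1 p v Φ) = twistedTranslateLp μ hγ hγ1 q v (C Φ) := by
  have hint : ∀ Φ : Lp ℂ p μ, Integrable Φ μ → (fun v =>
      C (twistedTranslateLp μ hγ hγ1 p v Φ) - twistedTranslateLp μ hγ hγ1 q v (C Φ)) = 0 := by
    intro Φ hΦ
    refine Continuous.eq_zero_of_forall_integral_smul_eq_zero (𝕜 := ℂ) (μ := μ) (r := p)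
      ((C.continuous.comp (continuous_twistedTranslateLp_apply hγ hγ1 hp Φ)).sub
        (continuous_twistedTranslateLp_apply hγ hγ1 hq (C Φ))) fun ψ hψ hψp => ?_
    have hI := integrable_smul_twistedTranslateLp hγ hγ1 hp Φ hψ
    have hCI : ∫ y, ψ y • C (twistedTranslateLp μ hγ hγ1 p y Φ) ∂μ =
        C (twistedConvLp μ hγ hγ1 p Φ ψ) := by
      simp_rw [← C.map_smul]
      exact C.integral_comp_comm hI
    simp_rw [smul_sub]
    rw [integral_sub (by simpa only [C.map_smul] using C.integrable_comp hI)
      (integrable_smul_twistedTranslateLp hγ hγ1 hq (C Φ) hψ), hCI, H Φ hΦ ψ hψ hψp]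
    exact sub_self _
  have hext := Continuous.ext_on (Lp.dense_setOf_integrable hp)
    (C.continuous.comp (twistedTranslateLp μ hγ hγ1 p v).continuous)
    ((twistedTranslateLp μ hγ hγ1 q v).continuous.comp C.continuous)
    fun Φ hΦ => sub_eq_zero.1 (congrFun (hint Φ hΦ) v)
  exact congrFun hext Φ

end TwistedConvolution

theorem statement10_general {G : Type*} [Group G] [TopologicalSpace G] [IsTopologicalGroup G]
    [LocallyCompactSpace G] [T2Space G] [SecondCountableTopology G]
    [MeasurableSpace G] [BorelSpace G]
    (μ : Measure G) [μ.IsHaarMeasure] [μ.IsMulRightInvariant]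
    (γ : G × G → ℂ) (hγcont : Continuous γ) (hγ1 : ∀ p : G × G, ‖γ p‖ = 1)
    (p q : ℝ≥0∞) [Fact (1 ≤ p)] [Fact (1 ≤ q)] (hpq : p ≤ q) (hq : q < ⊤)
    (C : Lp ℂ p μ →L[ℂ] Lp ℂ q μ) :
    (∀ (φ ψ : G → ℂ), Integrable φ μ → ∀ hφp : MemLp φ p μ,
        Integrable ψ μ → MemLp ψ p μ →
        ∀ hc : MemLp (tconv μ γ φ ψ) p μ,
          (C (hc.toLp (tconv μ γ φ ψ)) : G → ℂ) =ᵐ[μ]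
            tconv μ γ (C (hφp.toLp φ) : G → ℂ) ψ) ↔
    (∀ v : G, ∀ φ : G → ℂ, ∀ hφp : MemLp φ p μ,
        ∀ hρ : MemLp (fun x => γ (x, v⁻¹) * φ (x * v⁻¹)) p μ,
          (C (hρ.toLp (fun x => γ (x, v⁻¹) * φ (x * v⁻¹))) : G → ℂ) =ᵐ[μ]
            fun x => γ (x, v⁻¹) * (C (hφp.toLp φ) : G → ℂ) (x * v⁻¹)) := by
  have hp : p ≠ ∞ := (hpq.trans_lt hq).ne
  constructor
  · intro H v φ hφ hρ
    have hcomm := commute_of_map_twistedConvLp hγcont hγ1 C hp hq.ne (fun Φ hΦ ψ hψ hψp => by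
      have hc := (Lp.memLp _).ae_eq (coeFn_twistedConvLp hγcont hγ1 hp Φ hψ)
      have hH := H Φ ψ hΦ (Lp.memLp Φ) hψ hψp hc
      rw [toLp_tconv hγcont hγ1 hp Φ hψ hc, Lp.toLp_coeFn] at hH
      exact Lp.ext (hH.trans (coeFn_twistedConvLp hγcont hγ1 hq.ne (C Φ) hψ).symm)) v
    have hρC : C (hρ.toLp _) = twistedTranslateLp μ hγcont hγ1 q v (C (hφ.toLp φ)) := by
      rw [← hcomm]
      exact congrArg C (toLp_twistedTranslate hγcont hγ1 v hφ hρ)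
    rw [hρC]
    exact coeFn_twistedTranslateLp hγcont hγ1 v _
  · intro H φ ψ _ hφ hψ _ hc
    have hcomm : ∀ v Φ, C (twistedTranslateLp μ hγcont hγ1 p v Φ) =
        twistedTranslateLp μ hγcont hγ1 q v (C Φ) := fun v Φ => by
      have hH := H v Φ (Lp.memLp Φ) (memLp_twistedTranslate hγcont hγ1 v (Lp.memLp Φ))
      rw [Lp.toLp_coeFn] at hH
      exact Lp.ext (hH.trans (coeFn_twistedTranslateLp hγcont hγ1 v (C Φ)).symm)
    have hφΦ := tconv_congr_ae_left (γ := γ) hφ.coeFn_toLp.symm ψ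
    rw [MemLp.toLp_congr hc (hc.ae_eq hφΦ) hφΦ, toLp_tconv hγcont hγ1 hp _ hψ,
      map_twistedConvLp_of_commute hγcont hγ1 C hp hcomm _ hψ]
    exact coeFn_twistedConvLp hγcont hγ1 hq.ne _ hψ

/-- On a second-countable unimodular locally compact group with a
continuous normalized circle-valued 2-cocycle `γ`, a bounded operator
`C : L^p(G) → L^q(G)` (`1 ≤ p ≤ q < ∞`) commutes with right `γ`-twisted convolutions,
i.e. `C(φ ∗_γ ψ) = (Cφ) ∗_γ ψ` for all `φ, ψ ∈ L¹ ∩ L^p`, if and only if it commutes with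
all the twisted right translations `ρ(v)φ = γ(·, v⁻¹)·φ(· v⁻¹)`. -/
theorem statement10 {G : Type*} [Group G] [TopologicalSpace G] [IsTopologicalGroup G]
    [LocallyCompactSpace G] [T2Space G] [SecondCountableTopology G]
    [MeasurableSpace G] [BorelSpace G]
    (μ : Measure G) [μ.IsHaarMeasure] [μ.IsMulRightInvariant]
    (γ : G × G → ℂ) (hγcont : Continuous γ) (hγ1 : ∀ p : G × G, ‖γ p‖ = 1)
    (hγcoc : ∀ x y z : G, γ (x, y) * γ (x * y, z) = γ (x, y * z) * γ (y, z))
    (hγnorm : ∀ x : G, γ (x, 1) = 1 ∧ γ (1, x) = 1)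
    (p q : ℝ≥0∞) [Fact (1 ≤ p)] [Fact (1 ≤ q)] (hpq : p ≤ q) (hq : q < ⊤)
    (C : Lp ℂ p μ →L[ℂ] Lp ℂ q μ) :
    (∀ (φ ψ : G → ℂ), Integrable φ μ → ∀ hφp : MemLp φ p μ,
        Integrable ψ μ → MemLp ψ p μ →
        ∀ hc : MemLp (tconv μ γ φ ψ) p μ,
          (C (hc.toLp (tconv μ γ φ ψ)) : G → ℂ) =ᵐ[μ]
            tconv μ γ (C (hφp.toLp φ) : G → ℂ) ψ) ↔
    (∀ v : G, ∀ φ : G → ℂ, ∀ hφp : MemLp φ p μ,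
        ∀ hρ : MemLp (fun x => γ (x, v⁻¹) * φ (x * v⁻¹)) p μ,
          (C (hρ.toLp (fun x => γ (x, v⁻¹) * φ (x * v⁻¹))) : G → ℂ) =ᵐ[μ]
            fun x => γ (x, v⁻¹) * (C (hφp.toLp φ) : G → ℂ) (x * v⁻¹)) :=
  statement10_general μ γ hγcont hγ1 p q hpq hq C
end

section
/- Let 𝔤 be a Lie algebra over ℝ with a basis X₁, …, X₈ whose Lie brackets of basis elements are: [X₁, X_k] = X_{k+1} for k = 2, …, 7; [X₂, X₃] = X₆ + X₇; [X₂, X₄] = X₇ + X₈; [X₂, X₅] = X₈; and [X_j, X_k] = 0 for all other pairs 1 ≤ j < k ≤ 8. Then 𝔤 is characteristically nilpotent: every derivation D of 𝔤 is a nilpotent linear endomorphism of 𝔤 (in fact D⁸ = 0). -/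
/-!
Give `B 0, …, B 7` the weights `1, 3, 4, 5, 6, 7, 8, 9`. Then `⁅B i, B j⁆` lies in the span of the
basis vectors of weight at least `weight i + weight j`; the only terms of strictly larger weight are
the `B 6` in `⁅B 1, B 2⁆` and the `B 7` in `⁅B 1, B 3⁆`. Since `B 0` and `B 1` generate the algebra
through `B (k + 1) = ⁅B 0, B k⁆`, a derivation `D` raises weights by `s` as soon as it does so on
`B 0` and `B 1`. Applying `D` to `⁅B 1, B 5⁆ = 0` kills the `B 0`-component of `D (B 1)`, so `D`
preserves the filtration. Its diagonal entries then satisfy `λₖ = λ₁ + (k - 1) λ₀` for `k ≥ 1`;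
the `B 5`-coordinate of `D ⁅B 1, B 2⁆` gives `λ₁ = 3 λ₀`, while its `B 6`-coordinate, in which the
superdiagonal entries of `D` cancel, gives `λ₁ = 4 λ₀`. So `D` strictly raises weights, i.e. it is
strictly triangular in the basis `B`.
-/

open Module Submodule

theorem Module.End.pow_eq_zero_of_apply_mem_span_gt {R M : Type*} [Semiring R]
    [AddCommMonoid M] [Module R M] {n : ℕ} (b : Basis (Fin n) R M) (f : Module.End R M)
    (hf : ∀ i, f (b i) ∈ span R (b '' Set.Ioi i)) : f ^ n = 0 := by
  let V (k : ℕ) : Submodule R M := span R (b '' {j | k ≤ (j : ℕ)})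
  have step (k : ℕ) : V k ≤ (V (k + 1)).comap f := span_le.2 <| by
    rintro _ ⟨j, hj, rfl⟩
    exact span_mono (Set.image_mono fun i (hi : j < i) => Nat.succ_le_of_lt (hj.trans_lt hi)) (hf j)
  have pow_mem (k : ℕ) (i : Fin n) : (f ^ k) (b i) ∈ V k := by
    induction k with
    | zero => exact subset_span ⟨i, Nat.zero_le _, rfl⟩
    | succ k ih => rw [pow_succ', Module.End.mul_apply]; exact step k ih
  have hVn : V n = ⊥ := by
    simp only [V, not_le.2 (Fin.is_lt _), Set.ofPred_false, Set.image_empty, span_empty]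
  refine b.ext fun i => ?_
  simpa [hVn] using pow_mem n i

namespace Filiform8

def weight : Fin 8 → ℤ := ![1, 3, 4, 5, 6, 7, 8, 9]

lemma weight_strictMono : StrictMono weight := by decide

lemma weight_add_one : ∀ {k : Fin 8}, 1 ≤ k → k ≤ 6 → weight (k + 1) = weight k + 1 := by
  decide

variable {L : Type*} [LieRing L] [LieAlgebra ℝ L]

structure IsStandardBasis (B : Basis (Fin 8) ℝ L) : Prop where
  h01 : ⁅B 0, B 1⁆ = B 2
  h02 : ⁅B 0, B 2⁆ = B 3
  h03 : ⁅B 0, B 3⁆ = B 4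
  h04 : ⁅B 0, B 4⁆ = B 5
  h05 : ⁅B 0, B 5⁆ = B 6
  h06 : ⁅B 0, B 6⁆ = B 7
  h07 : ⁅B 0, B 7⁆ = 0
  h12 : ⁅B 1, B 2⁆ = B 5 + B 6
  h13 : ⁅B 1, B 3⁆ = B 6 + B 7
  h14 : ⁅B 1, B 4⁆ = B 7
  h15 : ⁅B 1, B 5⁆ = 0
  h16 : ⁅B 1, B 6⁆ = 0
  h17 : ⁅B 1, B 7⁆ = 0
  hhigh : ∀ j k : Fin 8, 2 ≤ (j : ℕ) → j < k → ⁅B j, B k⁆ = 0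

variable (B : Basis (Fin 8) ℝ L)

def weightFiltration (w : ℤ) : Submodule ℝ L := span ℝ (B '' {j | w ≤ weight j})

variable {B}

lemma mem_weightFiltration_iff {x : L} {w : ℤ} :
    x ∈ weightFiltration B w ↔ ∀ j, weight j < w → B.repr x j = 0 := by
  rw [weightFiltration, B.mem_span_image]
  simp only [Set.subset_def, Finset.mem_coe, Finsupp.mem_support_iff, Set.mem_ofPred_eq]
  exact forall_congr' fun j =>
    ⟨fun h hj => by_contra fun h0 => (h h0).not_gt hj, fun h h0 => le_of_not_gt (h0 ∘ h)⟩

lemma basis_mem_weightFiltration {j : Fin 8} {w : ℤ} (h : w ≤ weight j) :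
    B j ∈ weightFiltration B w :=
  subset_span ⟨j, h, rfl⟩

lemma weightFiltration_antitone : Antitone (weightFiltration B) :=
  fun _ _ h => span_mono (Set.image_mono fun _ hj => h.trans hj)

lemma mem_weightFiltration_of_le_one (x : L) {w : ℤ} (hw : w ≤ 1) : x ∈ weightFiltration B w :=
  mem_weightFiltration_iff.2 fun j hj =>
    absurd hj (not_lt.2 (hw.trans ((by decide : ∀ j, 1 ≤ weight j) j)))

lemma repr_eq_zero_of_mem_weightFiltration {x : L} {w : ℤ} (hx : x ∈ weightFiltration B w)
    {j : Fin 8} (hj : weight j < w) : B.repr x j = 0 :=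
  mem_weightFiltration_iff.1 hx j hj

lemma sub_sum_smul_mem_weightFiltration {x : L} {v w : ℤ} (hx : x ∈ weightFiltration B v)
    (s : Finset (Fin 8)) (hs : ∀ j, weight j < w → j ∈ s ∨ weight j < v) :
    x - ∑ j ∈ s, B.repr x j • B j ∈ weightFiltration B w := by
  refine mem_weightFiltration_iff.2 fun j hj => ?_
  simp only [map_sub, map_sum, map_smul, Basis.repr_self, Finsupp.sub_apply,
    Finsupp.coe_finsetSum, Finset.sum_apply, Finsupp.smul_apply, Finsupp.single_apply,
    smul_eq_mul, mul_ite, mul_one, mul_zero, Finset.sum_ite_eq', sub_eq_zero]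
  rcases hs j hj with h | h
  · rw [if_pos h]
  · rw [repr_eq_zero_of_mem_weightFiltration hx h, ite_self]

lemma sub_smul_mem_weightFiltration {x : L} {k : Fin 8} {w : ℤ}
    (hx : x ∈ weightFiltration B (weight k))
    (hw : ∀ j, weight j < w → j = k ∨ weight j < weight k) :
    x - B.repr x k • B k ∈ weightFiltration B w := by
  simpa using sub_sum_smul_mem_weightFiltration hx {k} (by simpa using hw)

namespace IsStandardBasis

lemma lie_basis_mem_of_lt (hB : IsStandardBasis B) {i j : Fin 8} (hij : i < j) :
    ⁅B i, B j⁆ ∈ weightFiltration B (weight i + weight j) := by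
  fin_cases i <;> fin_cases j <;> simp only [Fin.zero_eta, Fin.mk_one, Fin.reduceFinMk] at hij ⊢ <;>
    first
    | exact absurd hij (by decide)
    | (rw [hB.hhigh _ _ (by decide) hij]; exact zero_mem _)
    | (simp only [hB.h01, hB.h02, hB.h03, hB.h04, hB.h05, hB.h06, hB.h07, hB.h12, hB.h13, hB.h14,
          hB.h15, hB.h16, hB.h17]
       first
       | exact zero_mem _
       | exact basis_mem_weightFiltration (by decide)
       | exact add_mem (basis_mem_weightFiltration (by decide))
           (basis_mem_weightFiltration (by decide)))

lemma lie_basis_mem (hB : IsStandardBasis B) (i j : Fin 8) :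
    ⁅B i, B j⁆ ∈ weightFiltration B (weight i + weight j) := by
  rcases lt_trichotomy i j with hij | rfl | hij
  · exact hB.lie_basis_mem_of_lt hij
  · rw [lie_self]
    exact zero_mem _
  · rw [← lie_skew, add_comm]
    exact neg_mem (hB.lie_basis_mem_of_lt hij)

lemma lie_mem (hB : IsStandardBasis B) {x y : L} {a b : ℤ} (hx : x ∈ weightFiltration B a)
    (hy : y ∈ weightFiltration B b) : ⁅x, y⁆ ∈ weightFiltration B (a + b) := by
  induction hx, hy using span_induction₂ with
  | mem_mem x y hx hy =>
    obtain ⟨i, hi, rfl⟩ := hx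
    obtain ⟨j, hj, rfl⟩ := hy
    exact weightFiltration_antitone (add_le_add hi hj) (hB.lie_basis_mem i j)
  | zero_left => simp
  | zero_right => simp
  | add_left _ _ _ _ _ _ h h' => rw [add_lie]; exact add_mem h h'
  | add_right _ _ _ _ _ _ h h' => rw [lie_add]; exact add_mem h h'
  | smul_left _ _ _ _ _ h => rw [smul_lie]; exact smul_mem _ _ h
  | smul_right _ _ _ _ _ h => rw [lie_smul]; exact smul_mem _ _ h

lemma repr_lie_zero_succ (hB : IsStandardBasis B) (y : L) {j : Fin 8} (hj₁ : 1 ≤ j) (hj₆ : j ≤ 6) :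
    B.repr ⁅B 0, y⁆ (j + 1) = B.repr y j := by
  have : (B.coord (j + 1)).comp (LieModule.toEnd ℝ L L (B 0)) = B.coord j := B.ext fun m => by
    simp only [LinearMap.comp_apply, LieModule.toEnd_apply_apply, Basis.coord_apply]
    fin_cases m <;> simp only [Fin.zero_eta, Fin.mk_one, Fin.reduceFinMk, lie_self, hB.h01, hB.h02,
      hB.h03, hB.h04, hB.h05, hB.h06, hB.h07] <;> fin_cases j <;> simp at hj₁ hj₆ ⊢
  exact LinearMap.congr_fun this y

lemma lie_zero_basis (hB : IsStandardBasis B) {k : Fin 8} (hk₁ : 1 ≤ k) (hk₆ : k ≤ 6) :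
    ⁅B 0, B k⁆ = B (k + 1) := by
  revert hk₁ hk₆
  fin_cases k <;> simp [hB.h01, hB.h02, hB.h03, hB.h04, hB.h05, hB.h06]

variable (D : LieDerivation ℝ L L)

lemma apply_basis_mem_of_lie_zero (hB : IsStandardBasis B) {s : ℤ}
    (h₀ : D (B 0) ∈ weightFiltration B (weight 0 + s)) {k k' : Fin 8} (hk : ⁅B 0, B k⁆ = B k')
    (hw : weight k' = weight 0 + weight k) (hDk : D (B k) ∈ weightFiltration B (weight k + s)) :
    D (B k') ∈ weightFiltration B (weight k' + s) := by
  rw [← hk, D.apply_lie_eq_add, hw]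
  refine add_mem ?_ ?_
  · simpa only [add_assoc] using hB.lie_mem (basis_mem_weightFiltration le_rfl) hDk
  · simpa only [add_right_comm] using hB.lie_mem h₀ (basis_mem_weightFiltration le_rfl)

lemma apply_basis_mem_add_of_two_le (hB : IsStandardBasis B) {s : ℤ}
    (h₀ : D (B 0) ∈ weightFiltration B (weight 0 + s))
    (h₂ : D (B 2) ∈ weightFiltration B (weight 2 + s)) {k : Fin 8} (hk : 2 ≤ k) :
    D (B k) ∈ weightFiltration B (weight k + s) := by
  have h₃ := hB.apply_basis_mem_of_lie_zero D h₀ hB.h02 (by decide) h₂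
  have h₄ := hB.apply_basis_mem_of_lie_zero D h₀ hB.h03 (by decide) h₃
  have h₅ := hB.apply_basis_mem_of_lie_zero D h₀ hB.h04 (by decide) h₄
  have h₆ := hB.apply_basis_mem_of_lie_zero D h₀ hB.h05 (by decide) h₅
  have h₇ := hB.apply_basis_mem_of_lie_zero D h₀ hB.h06 (by decide) h₆
  fin_cases k <;> first | exact absurd hk (by decide) | assumption

lemma apply_basis_mem_add (hB : IsStandardBasis B) {s : ℤ}
    (h₀ : D (B 0) ∈ weightFiltration B (weight 0 + s))
    (h₁ : D (B 1) ∈ weightFiltration B (weight 1 + s)) (k : Fin 8) :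
    D (B k) ∈ weightFiltration B (weight k + s) := by
  obtain rfl | rfl | hk : k = 0 ∨ k = 1 ∨ 2 ≤ k := by omega
  · exact h₀
  · exact h₁
  · exact hB.apply_basis_mem_add_of_two_le D h₀
      (hB.apply_basis_mem_of_lie_zero D h₀ hB.h01 (by decide) h₁) hk

lemma apply_basis_two_mem_weight (hB : IsStandardBasis B) : D (B 2) ∈ weightFiltration B (weight 2) := by
  have hr : D (B 1) - B.repr (D (B 1)) 0 • B 0 ∈ weightFiltration B 3 :=
    sub_smul_mem_weightFiltration (mem_weightFiltration_of_le_one _ le_rfl) (by decide)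
  have hlie : ⁅B 0, D (B 1)⁆ = ⁅B 0, D (B 1) - B.repr (D (B 1)) 0 • B 0⁆ := by
    rw [lie_sub, lie_smul, lie_self, smul_zero, sub_zero]
  rw [← hB.h01, D.apply_lie_eq_add, hlie]
  refine add_mem ?_ ?_
  · exact weightFiltration_antitone (by decide) (hB.lie_mem (basis_mem_weightFiltration le_rfl) hr)
  · exact weightFiltration_antitone (by decide)
      (hB.lie_mem (mem_weightFiltration_of_le_one (D (B 0)) le_rfl)
        (basis_mem_weightFiltration le_rfl))

lemma repr_apply_one_zero (hB : IsStandardBasis B) : B.repr (D (B 1)) 0 = 0 := by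
  set β := B.repr (D (B 1)) 0
  have h₅ : D (B 5) ∈ weightFiltration B (weight 5 + 0) :=
    hB.apply_basis_mem_add_of_two_le D (mem_weightFiltration_of_le_one _ (by decide))
      (by simpa using hB.apply_basis_two_mem_weight D) (by decide)
  have hr : D (B 1) - β • B 0 ∈ weightFiltration B 3 :=
    sub_smul_mem_weightFiltration (mem_weightFiltration_of_le_one _ le_rfl) (by decide)
  have key : ⁅B 1, D (B 5)⁆ + β • B 6 + ⁅D (B 1) - β • B 0, B 5⁆ = 0 := by
    rw [sub_lie, smul_lie, hB.h05, add_assoc, add_sub_cancel, ← D.apply_lie_eq_add, hB.h15,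
      map_zero]
  have := congrArg (fun x => B.repr x 6) key
  simp only [map_add, map_smul, Finsupp.add_apply, Finsupp.smul_apply, Basis.repr_self,
    Finsupp.single_eq_same, smul_eq_mul, mul_one, map_zero, Finsupp.coe_zero, Pi.zero_apply] at this
  rwa [repr_eq_zero_of_mem_weightFiltration (hB.lie_mem (basis_mem_weightFiltration le_rfl) h₅)
      (by decide), repr_eq_zero_of_mem_weightFiltration (hB.lie_mem hr
      (basis_mem_weightFiltration le_rfl)) (by decide), zero_add, add_zero] at this

lemma apply_basis_mem_weight (hB : IsStandardBasis B) (k : Fin 8) :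
    D (B k) ∈ weightFiltration B (weight k) := by
  have h₁ : D (B 1) ∈ weightFiltration B (weight 1 + 0) := mem_weightFiltration_iff.2 fun j hj => by
    obtain rfl : j = 0 := (by decide : ∀ j, weight j < weight 1 + 0 → j = 0) j hj
    exact hB.repr_apply_one_zero D
  simpa using hB.apply_basis_mem_add D (mem_weightFiltration_of_le_one _ (by decide)) h₁ k

lemma apply_add_one_sub_mem (hB : IsStandardBasis B) {k : Fin 8} (hk₁ : 1 ≤ k) (hk₆ : k ≤ 6) :
    D (B (k + 1)) - B.repr (D (B 0)) 0 • B (k + 1) - ⁅B 0, D (B k)⁆ ∈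
      weightFiltration B (weight k + 3) := by
  have hr : D (B 0) - B.repr (D (B 0)) 0 • B 0 ∈ weightFiltration B 3 :=
    sub_smul_mem_weightFiltration (mem_weightFiltration_of_le_one _ le_rfl) (by decide)
  have h : D (B (k + 1)) - B.repr (D (B 0)) 0 • B (k + 1) - ⁅B 0, D (B k)⁆ =
      ⁅D (B 0) - B.repr (D (B 0)) 0 • B 0, B k⁆ := by
    rw [← hB.lie_zero_basis hk₁ hk₆, D.apply_lie_eq_add, sub_lie, smul_lie]
    abel
  rw [h, add_comm]
  exact hB.lie_mem hr (basis_mem_weightFiltration le_rfl)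

lemma repr_apply_add_one_self (hB : IsStandardBasis B) {k : Fin 8} (hk₁ : 1 ≤ k) (hk₆ : k ≤ 6) :
    B.repr (D (B (k + 1))) (k + 1) = B.repr (D (B 0)) 0 + B.repr (D (B k)) k := by
  have h := repr_eq_zero_of_mem_weightFiltration (hB.apply_add_one_sub_mem D hk₁ hk₆) (j := k + 1)
    (by rw [weight_add_one hk₁ hk₆]; omega)
  simp only [map_sub, map_smul, Finsupp.sub_apply, Finsupp.smul_apply, Basis.repr_self,
    Finsupp.single_eq_same, smul_eq_mul, mul_one, hB.repr_lie_zero_succ _ hk₁ hk₆] at h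
  linarith

lemma repr_apply_add_one_add_one (hB : IsStandardBasis B) {k : Fin 8} (hk₁ : 1 ≤ k) (hk₅ : k ≤ 5) :
    B.repr (D (B (k + 1))) (k + 1 + 1) = B.repr (D (B k)) (k + 1) := by
  have h := repr_eq_zero_of_mem_weightFiltration (hB.apply_add_one_sub_mem D hk₁ (by omega))
    (j := k + 1 + 1)
    (by rw [weight_add_one (by omega) (by omega), weight_add_one hk₁ (by omega)]; omega)
  simp only [map_sub, map_smul, Finsupp.sub_apply, Finsupp.smul_apply, Basis.repr_self,
    Finsupp.single_apply, smul_eq_mul, hB.repr_lie_zero_succ _ (by omega : 1 ≤ k + 1) (by omega)]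
    at h
  simpa [sub_eq_zero] using h

lemma repr_apply_five_six (hB : IsStandardBasis B) :
    B.repr (D (B 5)) 5 = B.repr (D (B 1)) 1 + B.repr (D (B 2)) 2 ∧
    B.repr (D (B 5)) 6 + B.repr (D (B 6)) 6 =
      B.repr (D (B 1)) 1 + B.repr (D (B 2)) 2 + B.repr (D (B 2)) 3 := by
  have hr₁ := sub_sum_smul_mem_weightFiltration (w := 5)
    (hB.apply_basis_mem_weight D 1) {1, 2} (by decide)
  have hr₂ := sub_sum_smul_mem_weightFiltration (w := 6)
    (hB.apply_basis_mem_weight D 2) {2, 3} (by decide)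
  simp only [Finset.sum_pair (by decide : (1 : Fin 8) ≠ 2),
    Finset.sum_pair (by decide : (2 : Fin 8) ≠ 3)] at hr₁ hr₂
  set a₁ := B.repr (D (B 1)) 1
  set b₁ := B.repr (D (B 1)) 2
  set a₂ := B.repr (D (B 2)) 2
  set b₂ := B.repr (D (B 2)) 3
  set r₁ := D (B 1) - (a₁ • B 1 + b₁ • B 2)
  set r₂ := D (B 2) - (a₂ • B 2 + b₂ • B 3)
  have key : D (B 5) + D (B 6) =
      ⁅B 1, r₂⁆ + ⁅r₁, B 2⁆ + (a₁ + a₂) • (B 5 + B 6) + b₂ • (B 6 + B 7) := by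
    rw [← map_add, ← hB.h12, D.apply_lie_eq_add, ← sub_add_cancel (D (B 1)) (a₁ • B 1 + b₁ • B 2),
      ← sub_add_cancel (D (B 2)) (a₂ • B 2 + b₂ • B 3)]
    simp only [lie_add, add_lie, lie_smul, smul_lie, hB.h12, hB.h13, lie_self, smul_zero]
    module
  have z₁ := hB.lie_mem (basis_mem_weightFiltration (j := 1) le_rfl) hr₂
  have z₂ := hB.lie_mem hr₁ (basis_mem_weightFiltration (j := 2) le_rfl)
  have z₃ := hB.apply_basis_mem_weight D 6
  have h₅ := congrArg (fun x => B.repr x 5) key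
  have h₆ := congrArg (fun x => B.repr x 6) key
  simp only [map_add, map_smul, Finsupp.add_apply, Finsupp.smul_apply, Basis.repr_self,
    Finsupp.single_apply, smul_eq_mul, Fin.reduceEq, ↓reduceIte, add_zero, zero_add, mul_one,
    mul_zero, repr_eq_zero_of_mem_weightFiltration z₁ (j := 5) (by decide),
    repr_eq_zero_of_mem_weightFiltration z₁ (j := 6) (by decide),
    repr_eq_zero_of_mem_weightFiltration z₂ (j := 5) (by decide),
    repr_eq_zero_of_mem_weightFiltration z₂ (j := 6) (by decide),
    repr_eq_zero_of_mem_weightFiltration z₃ (j := 5) (by decide)] at h₅ h₆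
  constructor <;> linarith

lemma repr_apply_zero_zero_and_repr_apply_one_one (hB : IsStandardBasis B) :
    B.repr (D (B 0)) 0 = 0 ∧ B.repr (D (B 1)) 1 = 0 := by
  have l₂ := hB.repr_apply_add_one_self D (k := 1) le_rfl (by decide)
  have l₃ := hB.repr_apply_add_one_self D (k := 2) (by decide) (by decide)
  have l₄ := hB.repr_apply_add_one_self D (k := 3) (by decide) (by decide)
  have l₅ := hB.repr_apply_add_one_self D (k := 4) (by decide) (by decide)
  have l₆ := hB.repr_apply_add_one_self D (k := 5) (by decide) (by decide)
  have m₃ := hB.repr_apply_add_one_add_one D (k := 2) (by decide) (by decide)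
  have m₄ := hB.repr_apply_add_one_add_one D (k := 3) (by decide) (by decide)
  have m₅ := hB.repr_apply_add_one_add_one D (k := 4) (by decide) (by decide)
  obtain ⟨e₅, e₆⟩ := hB.repr_apply_five_six D
  simp only [Fin.reduceAdd] at l₂ l₃ l₄ l₅ l₆ m₃ m₄ m₅
  -- with `l₂, …, l₆`, `e₅` gives `λ₁ = 3 λ₀`, and `e₆`, whose superdiagonal entries cancel by
  -- `m₃, m₄, m₅`, gives `λ₁ = 4 λ₀`
  constructor <;> linarith

lemma apply_basis_mem_span_gt (hB : IsStandardBasis B) (k : Fin 8) :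
    D (B k) ∈ span ℝ (B '' Set.Ioi k) := by
  obtain ⟨h₀₀, h₁₁⟩ := hB.repr_apply_zero_zero_and_repr_apply_one_one D
  have h₀ : D (B 0) ∈ weightFiltration B (weight 0 + 1) := mem_weightFiltration_iff.2 fun j hj => by
    obtain rfl : j = 0 := (by decide : ∀ j, weight j < weight 0 + 1 → j = 0) j hj
    exact h₀₀
  have h₁ : D (B 1) ∈ weightFiltration B (weight 1 + 1) := mem_weightFiltration_iff.2 fun j hj => by
    obtain rfl | rfl : j = 0 ∨ j = 1 :=
      (by decide : ∀ j, weight j < weight 1 + 1 → j = 0 ∨ j = 1) j hj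
    · exact hB.repr_apply_one_zero D
    · exact h₁₁
  exact span_mono
    (Set.image_mono fun j hj => weight_strictMono.lt_iff_lt.1 (Int.add_one_le_iff.1 hj))
    (hB.apply_basis_mem_add D h₀ h₁ k)

end IsStandardBasis

end Filiform8

/-- The 8-dimensional real Lie algebra with basis `X₁, …, X₈`
(here `B 0, …, B 7`) and the indicated brackets is characteristically nilpotent:
every derivation `D` is a nilpotent linear endomorphism; in fact `D ^ 8 = 0`. -/
theorem statement15 {L : Type*} [LieRing L] [LieAlgebra ℝ L] (B : Module.Basis (Fin 8) ℝ L)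
    (h01 : ⁅B 0, B 1⁆ = B 2) (h02 : ⁅B 0, B 2⁆ = B 3) (h03 : ⁅B 0, B 3⁆ = B 4)
    (h04 : ⁅B 0, B 4⁆ = B 5) (h05 : ⁅B 0, B 5⁆ = B 6) (h06 : ⁅B 0, B 6⁆ = B 7)
    (h07 : ⁅B 0, B 7⁆ = 0)
    (h12 : ⁅B 1, B 2⁆ = B 5 + B 6) (h13 : ⁅B 1, B 3⁆ = B 6 + B 7) (h14 : ⁅B 1, B 4⁆ = B 7)
    (h15 : ⁅B 1, B 5⁆ = 0) (h16 : ⁅B 1, B 6⁆ = 0) (h17 : ⁅B 1, B 7⁆ = 0)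
    (hhigh : ∀ j k : Fin 8, 2 ≤ (j : ℕ) → j < k → ⁅B j, B k⁆ = 0) :
    ∀ D : LieDerivation ℝ L L,
      IsNilpotent (D.toLinearMap : Module.End ℝ L) ∧
      (D.toLinearMap : Module.End ℝ L) ^ 8 = 0 := by
  intro D
  have hB : Filiform8.IsStandardBasis B :=
    ⟨h01, h02, h03, h04, h05, h06, h07, h12, h13, h14, h15, h16, h17, hhigh⟩
  have hD : (D.toLinearMap : Module.End ℝ L) ^ 8 = 0 :=
    Module.End.pow_eq_zero_of_apply_mem_span_gt B _ (hB.apply_basis_mem_span_gt D)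
  exact ⟨⟨8, hD⟩, hD⟩
end

section
/- Let 𝔤 be a Lie algebra over ℝ with a basis X₁, …, X₈ whose Lie brackets of basis elements are: [X₁, X_k] = X_{k+1} for k = 2, …, 7; [X₂, X₃] = X₆ + X₇; [X₂, X₄] = X₇ + X₈; [X₂, X₅] = X₈; and [X_j, X_k] = 0 for all other pairs 1 ≤ j < k ≤ 8. Then the center of 𝔤, i.e. {x ∈ 𝔤 : [x, y] = 0 for all y ∈ 𝔤}, equals the one-dimensional subspace ℝ·X₈ spanned by X₈. -/
/-! Writing `Xᵢ₊₁ = B i`: `ad X₁` shifts `X₂, …, X₇` to `X₃, …, X₈` and kills `X₁` and `X₈`,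
so reading off coordinates shows that an element commuting with `X₁` lies in `ℝ X₁ + ℝ X₈`. Bracketing
`c X₁ + d X₈` with `X₂` gives `c X₃`, so a central element has `c = 0`. Conversely `X₈`
commutes with every basis vector. -/

namespace Module.Basis

variable {ι κ R M N : Type*} [Semiring R] [AddCommMonoid M] [Module R M]
  [AddCommMonoid N] [Module R N]

theorem repr_map_apply_of_map_basis (B : Basis ι R M) (C : Basis κ R N) (f : M →ₗ[R] N)
    {S : Set ι} {σ : ι → κ} (hσ : S.InjOn σ) (hfS : ∀ i ∈ S, f (B i) = C (σ i))
    (hf0 : ∀ i ∉ S, f (B i) = 0) {k : ι} (hk : k ∈ S) (x : M) :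
    C.repr (f x) (σ k) = B.repr x k := by
  classical
  have hcoord : (C.coord (σ k)).comp f = B.coord k := B.ext fun i => by
    by_cases hi : i ∈ S
    · simp [hfS i hi, Finsupp.single_apply, hσ.eq_iff hi hk]
    · have hik : i ≠ k := fun h => hi (h ▸ hk)
      simp [hf0 i hi, hik]
  exact LinearMap.congr_fun hcoord x

end Module.Basis

section

variable {ι R L : Type*} [CommRing R] [LieRing L] [LieAlgebra R L]

theorem forall_lie_eq_zero_iff_basis (B : Module.Basis ι R L) (x : L) :
    (∀ y : L, ⁅x, y⁆ = 0) ↔ ∀ i, ⁅x, B i⁆ = 0 := by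
  refine ⟨fun h i => h (B i), fun h y => ?_⟩
  have had : LieAlgebra.ad R L x = 0 := B.ext fun i => by simpa using h i
  simpa using LinearMap.congr_fun had y

variable (B : Module.Basis (Fin 8) R L)

theorem lie_basis_seven_eq_zero (h07 : ⁅B 0, B 7⁆ = 0) (h17 : ⁅B 1, B 7⁆ = 0)
    (hhigh : ∀ j k : Fin 8, 2 ≤ (j : ℕ) → j < k → ⁅B j, B k⁆ = 0) (i : Fin 8) :
    ⁅B 7, B i⁆ = 0 := by
  rw [← lie_skew, neg_eq_zero]
  fin_cases i
  · exact h07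
  · exact h17
  all_goals first
    | exact lie_self _
    | exact hhigh _ 7 (by decide) (by decide)

theorem eq_smul_basis_zero_add_smul_basis_seven_of_lie_eq_zero
    (h01 : ⁅B 0, B 1⁆ = B 2) (h02 : ⁅B 0, B 2⁆ = B 3) (h03 : ⁅B 0, B 3⁆ = B 4)
    (h04 : ⁅B 0, B 4⁆ = B 5) (h05 : ⁅B 0, B 5⁆ = B 6) (h06 : ⁅B 0, B 6⁆ = B 7)
    (h07 : ⁅B 0, B 7⁆ = 0) {x : L} (hx : ⁅x, B 0⁆ = 0) :
    x = B.repr x 0 • B 0 + B.repr x 7 • B 7 := by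
  have hshift : ∀ i ∈ {k : Fin 8 | k ≠ 0 ∧ k ≠ 7},
      LieAlgebra.ad R L (B 0) (B i) = B (i + 1) := by
    rintro i ⟨h0, h7⟩
    fin_cases i <;> simp_all
  have hkill : ∀ i ∉ {k : Fin 8 | k ≠ 0 ∧ k ≠ 7}, LieAlgebra.ad R L (B 0) (B i) = 0 := by
    intro i hi
    obtain rfl | rfl : i = 0 ∨ i = 7 := by simpa [or_iff_not_imp_left] using hi
    · exact lie_self _
    · exact h07
  have hmid : ∀ k, k ≠ 0 → k ≠ 7 → B.repr x k = 0 := fun k h0 h7 => by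
    rw [← B.repr_map_apply_of_map_basis B _ (add_left_injective 1).injOn hshift hkill ⟨h0, h7⟩,
      LieAlgebra.ad_apply, ← lie_skew, hx, neg_zero, map_zero, Finsupp.zero_apply]
  conv_lhs => rw [← B.sum_repr x, Fin.sum_univ_eight]
  simp [hmid]

end

theorem statement18_general {L : Type*} [LieRing L] [LieAlgebra ℝ L] (B : Module.Basis (Fin 8) ℝ L)
    (h01 : ⁅B 0, B 1⁆ = B 2) (h02 : ⁅B 0, B 2⁆ = B 3) (h03 : ⁅B 0, B 3⁆ = B 4)
    (h04 : ⁅B 0, B 4⁆ = B 5) (h05 : ⁅B 0, B 5⁆ = B 6) (h06 : ⁅B 0, B 6⁆ = B 7)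
    (h07 : ⁅B 0, B 7⁆ = 0)
    (h17 : ⁅B 1, B 7⁆ = 0)
    (hhigh : ∀ j k : Fin 8, 2 ≤ (j : ℕ) → j < k → ⁅B j, B k⁆ = 0) :
    ∀ x : L, (∀ y : L, ⁅x, y⁆ = 0) ↔ x ∈ Submodule.span ℝ ({B 7} : Set L) := by
  have hB7 := lie_basis_seven_eq_zero B h07 h17 hhigh
  intro x
  rw [forall_lie_eq_zero_iff_basis B]
  constructor
  · intro hx
    have hx_eq := eq_smul_basis_zero_add_smul_basis_seven_of_lie_eq_zero B
      h01 h02 h03 h04 h05 h06 h07 (hx 0)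
    have hc0 : B.repr x 0 = 0 := by
      have h := hx 1
      rw [hx_eq, add_lie, smul_lie, smul_lie, h01, hB7, smul_zero, add_zero, smul_eq_zero] at h
      exact h.resolve_right (B.ne_zero 2)
    rw [hx_eq, hc0, zero_smul, zero_add]
    exact Submodule.smul_mem _ _ (Submodule.mem_span_singleton_self _)
  · intro hx i
    obtain ⟨r, rfl⟩ := Submodule.mem_span_singleton.mp hx
    rw [smul_lie, hB7, smul_zero]

/-- The center of the 8-dimensional real Lie algebra with basis
`X₁, …, X₈` (here `B 0, …, B 7`) and the indicated brackets is the one-dimensional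
subspace spanned by `X₈ = B 7`. -/
theorem statement18 {L : Type*} [LieRing L] [LieAlgebra ℝ L] (B : Module.Basis (Fin 8) ℝ L)
    (h01 : ⁅B 0, B 1⁆ = B 2) (h02 : ⁅B 0, B 2⁆ = B 3) (h03 : ⁅B 0, B 3⁆ = B 4)
    (h04 : ⁅B 0, B 4⁆ = B 5) (h05 : ⁅B 0, B 5⁆ = B 6) (h06 : ⁅B 0, B 6⁆ = B 7)
    (h07 : ⁅B 0, B 7⁆ = 0)
    (h12 : ⁅B 1, B 2⁆ = B 5 + B 6) (h13 : ⁅B 1, B 3⁆ = B 6 + B 7) (h14 : ⁅B 1, B 4⁆ = B 7)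
    (h15 : ⁅B 1, B 5⁆ = 0) (h16 : ⁅B 1, B 6⁆ = 0) (h17 : ⁅B 1, B 7⁆ = 0)
    (hhigh : ∀ j k : Fin 8, 2 ≤ (j : ℕ) → j < k → ⁅B j, B k⁆ = 0) :
    ∀ x : L, (∀ y : L, ⁅x, y⁆ = 0) ↔ x ∈ Submodule.span ℝ ({B 7} : Set L) :=
  statement18_general B h01 h02 h03 h04 h05 h06 h07 h17 hhigh
end
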